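/- arXiv:1411.7234 — 8 statements merged into one kernel-verified Lean document; each statement's English description precedes it below -/
import Mathlib

section
/- A metric space X is hyperconvex if and only if it is injective, i.e., for every isometric embedding ι : A → Y and every 1-Lipschitz map f : A → X there exists a 1-Lipschitz map f̄ : Y → X with f = f̄ ∘ ι. -/
/-- A metric space is hyperconvex if every family of closed balls whose radii
pairwise satisfy `dist (x i) (x j) ≤ r i + r j` has a common point. -/
def Hyperconvex (X : Type) [MetricSpace X] : Prop :=
  ∀ (ι : Type) (x : ι → X) (r : ι → ℝ), (∀ i, 0 ≤ r i) →
    (∀ i j, dist (x i) (x j) ≤ r i + r j) →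
    (⋂ i, Metric.closedBall (x i) (r i)).Nonempty

/-- A metric space `X` is injective if for every isometric embedding `ι : A → Y`
and every 1-Lipschitz map `f : A → X` there is a 1-Lipschitz `g : Y → X` with
`f = g ∘ ι`. -/
def InjectiveMetricSpace (X : Type) [MetricSpace X] : Prop :=
  ∀ (A Y : Type) (_ : MetricSpace A) (_ : MetricSpace Y) (ι : A → Y),
    Isometry ι → ∀ f : A → X, LipschitzWith 1 f →
      ∃ g : Y → X, LipschitzWith 1 g ∧ f = g ∘ ι

/-- A metric space is hyperconvex if and only if it is injective. -/
theorem hyperconvex_iff_injective (X : Type) [MetricSpace X] :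
    Hyperconvex X ↔ InjectiveMetricSpace X := by
  constructor
  · -- hyperconvex → injective
    intro hX A Y _ _ ι hι f hf
    classical
    set S : Set (Set (Y × X)) :=
      {G | (∀ a, (ι a, f a) ∈ G) ∧ ∀ p ∈ G, ∀ q ∈ G, dist p.2 q.2 ≤ dist p.1 q.1} with hS
    have h0 : (Set.range fun a => (ι a, f a)) ∈ S := by
      constructor
      · intro a; exact ⟨a, rfl⟩
      · rintro p ⟨a, rfl⟩ q ⟨b, rfl⟩
        calc dist (f a) (f b) ≤ dist a b := hf.dist_le_mul a b |>.trans (by simp)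
        _ = dist (ι a) (ι b) := (hι.dist_eq a b).symm
    have hub : ∀ c ⊆ S, IsChain (· ⊆ ·) c → c.Nonempty →
        ∃ ub ∈ S, ∀ s ∈ c, s ⊆ ub := by
      intro c hcS hchain hcne
      refine ⟨⋃₀ c, ⟨?_, ?_⟩, fun s hs => Set.subset_sUnion_of_mem hs⟩
      · obtain ⟨G₁, hG₁⟩ := hcne
        intro a; exact ⟨G₁, hG₁, (hcS hG₁).1 a⟩
      · rintro p ⟨G₁, hG₁, hp⟩ q ⟨G₂, hG₂, hq⟩
        rcases hchain.total hG₁ hG₂ with h | h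
        · exact (hcS hG₂).2 p (h hp) q hq
        · exact (hcS hG₁).2 p hp q (h hq)
    obtain ⟨G, -, hGS, hGmax⟩ := zorn_subset_nonempty S hub _ h0
    -- G is total
    have htot : ∀ y, ∃ x, (y, x) ∈ G := by
      by_contra h
      push_neg at h
      obtain ⟨y₀, hy₀⟩ := h
      have hpair : ∀ p q : ↥G,
          dist (p : Y × X).2 (q : Y × X).2 ≤ dist y₀ (p : Y × X).1 + dist y₀ (q : Y × X).1 := by
        intro p q
        calc dist (p : Y × X).2 (q : Y × X).2 ≤ dist (p : Y × X).1 (q : Y × X).1 :=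
              hGS.2 _ p.2 _ q.2
        _ ≤ dist (p : Y × X).1 y₀ + dist y₀ (q : Y × X).1 := dist_triangle _ _ _
        _ = dist y₀ (p : Y × X).1 + dist y₀ (q : Y × X).1 := by rw [dist_comm]
      obtain ⟨c, hc⟩ := hX (↥G) (fun p => (p : Y × X).2) (fun p => dist y₀ (p : Y × X).1)
        (fun p => dist_nonneg) hpair
      simp only [Set.mem_iInter, Metric.mem_closedBall] at hc
      have hmem : insert (y₀, c) G ∈ S := by
        constructor
        · intro a; exact Set.mem_insert_of_mem _ (hGS.1 a)
        · rintro p (rfl | hp) q (rfl | hq)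
          · simp
          · have := hc ⟨q, hq⟩
            simpa [dist_comm] using this
          · have := hc ⟨p, hp⟩
            simpa [dist_comm] using this
          · exact hGS.2 p hp q hq
      have := hGmax hmem (Set.subset_insert _ _) (Set.mem_insert _ _)
      exact hy₀ c this
    set g : Y → X := fun y => Classical.choose (htot y) with hg
    have hgmem : ∀ y, (y, g y) ∈ G := fun y => Classical.choose_spec (htot y)
    refine ⟨g, LipschitzWith.mk_one fun y y' => hGS.2 _ (hgmem y) _ (hgmem y'), ?_⟩
    funext a
    have h1 := hGS.2 _ (hGS.1 a) _ (hgmem (ι a))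
    simp only [dist_self] at h1
    exact eq_of_dist_eq_zero (le_antisymm h1 dist_nonneg)
  · -- injective → hyperconvex
    intro hinj ιT x r hr hxr
    classical
    rcases isEmpty_or_nonempty ιT with hι | hι
    · obtain ⟨g, -, -⟩ := hinj Empty PUnit inferInstance inferInstance
        (fun e => e.elim) (fun e => e.elim) (fun e => e.elim) (fun e => e.elim)
      simp only [Set.iInter_of_empty]
      exact ⟨g PUnit.unit, Set.mem_univ _⟩
    · by_cases hx : ∃ z, ∀ j, dist z (x j) ≤ r j
      · obtain ⟨z, hz⟩ := hx
        exact ⟨z, Set.mem_iInter.2 fun j => Metric.mem_closedBall.2 (hz j)⟩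
      · push_neg at hx
        set ρ : X → ℝ := fun a => ⨅ i, (r i + dist a (x i)) with hρ
        have hbdd : ∀ a : X, BddBelow (Set.range fun i => r i + dist a (x i)) := by
          intro a
          exact ⟨0, by rintro v ⟨i, rfl⟩; exact add_nonneg (hr i) dist_nonneg⟩
        have hρ_le : ∀ a i, ρ a ≤ r i + dist a (x i) := fun a i => ciInf_le (hbdd a) i
        have hρpos : ∀ a, 0 < ρ a := by
          intro a
          by_contra h
          push_neg at h
          obtain ⟨j, hj⟩ := hx a
          have : dist a (x j) - r j ≤ ρ a := by
            apply le_ciInf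
            intro i
            have : dist a (x j) ≤ dist a (x i) + dist (x i) (x j) := dist_triangle _ _ _
            have h2 := hxr i j
            linarith
          have : dist a (x j) ≤ r j := by
            have hρ0 : 0 ≤ ρ a := le_ciInf fun i => add_nonneg (hr i) dist_nonneg
            linarith [le_antisymm h hρ0 ▸ this]
          exact absurd this (not_le.2 hj)
        have hρ_lip : ∀ a b : X, ρ a ≤ dist a b + ρ b := by
          intro a b
          have : ρ a - dist a b ≤ ρ b := by
            apply le_ciInf
            intro i
            have := hρ_le a i
            have : dist a (x i) ≤ dist a b + dist b (x i) := dist_triangle _ _ _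
            have := hρ_le a i
            linarith [hρ_le a i, dist_triangle a b (x i)]
          linarith
        have hρρ : ∀ a b : X, dist a b ≤ ρ a + ρ b := by
          intro a b
          have h1 : ∀ i, dist a b - (r i + dist a (x i)) ≤ ρ b := by
            intro i
            apply le_ciInf
            intro j
            have := dist_triangle4 a (x i) (x j) b
            have h2 := hxr i j
            rw [dist_comm (x j) b] at this
            linarith
          have : dist a b - ρ b ≤ ρ a := by
            apply le_ciInf
            intro i
            linarith [h1 i]
          linarith
        -- metric on Option X
        set d : Option X → Option X → ℝ := fun p q =>
          match p, q with
          | some a, some b => dist a b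
          | some a, none => ρ a
          | none, some b => ρ b
          | none, none => 0 with hd
        letI : MetricSpace (Option X) :=
          { dist := d
            dist_self := by rintro (_ | a) <;> simp [hd]
            dist_comm := by rintro (_ | a) (_ | b) <;> simp [hd, dist_comm]
            dist_triangle := by
              rintro (_ | a) (_ | b) (_ | c) <;> simp only [hd]
              · simp
              · simp
              · linarith [hρpos b]
              · rw [dist_comm b c]; linarith [hρ_lip c b]
              · simp
              · exact hρρ a c
              · exact hρ_lip a b
              · exact dist_triangle a b c
            eq_of_dist_eq_zero := by
              rintro (_ | a) (_ | b) h <;> simp only [hd] at h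
              · rfl
              · exact absurd h (ne_of_gt (hρpos b))
              · exact absurd h (ne_of_gt (hρpos a))
              · exact congrArg some (eq_of_dist_eq_zero h) }
        obtain ⟨g, hg, hgf⟩ := hinj X (Option X) inferInstance inferInstance some
          (Isometry.of_dist_eq fun a b => rfl) id (LipschitzWith.id)
        refine ⟨g none, Set.mem_iInter.2 fun i => Metric.mem_closedBall.2 ?_⟩
        have h1 : dist (g none) (g (some (x i))) ≤ dist (none : Option X) (some (x i)) := by
          simpa using hg.dist_le_mul none (some (x i))
        have h2 : g (some (x i)) = x i := (congrFun hgf (x i)).symm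
        have h3 : dist (none : Option X) (some (x i)) = ρ (x i) := rfl
        rw [h2, h3] at h1
        calc dist (g none) (x i) ≤ ρ (x i) := h1
        _ ≤ r i + dist (x i) (x i) := hρ_le (x i) i
        _ = r i := by simp
end

section
/- A connected subgraph H of a median graph G is convex if and only if it is 2-convex, i.e., for every pair of vertices x, y ∈ H with d(x,y) = 2 the metric interval I(x,y) is contained in H. -/
/-- The metric interval between two vertices of a graph (with the path metric). -/
def gInterval {V : Type} (G : SimpleGraph V) (x y : V) : Set V :=
  {w | G.dist x w + G.dist w y = G.dist x y}

/-- A vertex set is convex if it contains all metric intervals between its points. -/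
def GConvex {V : Type} (G : SimpleGraph V) (H : Set V) : Prop :=
  ∀ x ∈ H, ∀ y ∈ H, gInterval G x y ⊆ H

/-- A graph is median if it is connected and every triple of vertices has a unique
median, i.e. a unique vertex lying in all three pairwise metric intervals. -/
def IsMedianGraph {V : Type} (G : SimpleGraph V) : Prop :=
  G.Connected ∧ ∀ x y z : V,
    ∃! w, w ∈ gInterval G x y ∧ w ∈ gInterval G y z ∧ w ∈ gInterval G x z

section Aux

variable {V : Type} {G : SimpleGraph V}

private lemma median_dists (hG : IsMedianGraph G) (x y z : V) :
    ∃ m, G.dist x m + G.dist m y = G.dist x y ∧ G.dist y m + G.dist m z = G.dist y z ∧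
      G.dist x m + G.dist m z = G.dist x z := by
  obtain ⟨m, ⟨h1, h2, h3⟩, -⟩ := hG.2 x y z
  exact ⟨m, h1, h2, h3⟩

/-- In a median graph, any vertex has distances to the two ends of any edge
differing by exactly one (this is essentially bipartiteness). -/
private lemma step_dist (hG : IsMedianGraph G) {a b : V} (hab : G.Adj a b) (c : V) :
    G.dist c a + 1 = G.dist c b ∨ G.dist c b + 1 = G.dist c a := by
  obtain ⟨m, h1, h2, h3⟩ := median_dists hG a b c
  have hd : G.dist a b = 1 := SimpleGraph.dist_eq_one_iff_adj.mpr hab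
  rw [hd] at h1
  have c1 : G.dist c a = G.dist a c := SimpleGraph.dist_comm
  have c2 : G.dist c b = G.dist b c := SimpleGraph.dist_comm
  have c3 : G.dist b a = G.dist a b := SimpleGraph.dist_comm
  have h0 : G.dist a m = 0 ∨ G.dist m b = 0 := by omega
  rcases h0 with h0 | h0
  · have ha : a = m := (hG.1.dist_eq_zero_iff).mp h0
    subst ha
    left; omega
  · have hb : m = b := (hG.1.dist_eq_zero_iff).mp h0
    subst hb
    right; omega

/-- In a median graph, a connected 2-convex vertex set is "isometric": for distinct
`x, y` in it there is a neighbor `u` of `y` in the set lying on a geodesic to `x`;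
moreover `u` is joined to `x` by a strictly shorter walk inside the set. -/
private lemma iso (hG : IsMedianGraph G) {H : Set V}
    (h2c : ∀ x ∈ H, ∀ y ∈ H, G.dist x y = 2 → gInterval G x y ⊆ H) :
    ∀ n (x y : V) (hx : x ∈ H) (hy : y ∈ H)
      (p : (G.induce H).Walk ⟨y, hy⟩ ⟨x, hx⟩), p.length = n → x ≠ y →
      ∃ u, ∃ hu : u ∈ H, G.Adj u y ∧ G.dist x u + 1 = G.dist x y ∧
        ∃ q : (G.induce H).Walk ⟨u, hu⟩ ⟨x, hx⟩, q.length < n := by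
  intro n
  induction n using Nat.strong_induction_on with
  | _ n IH =>
  intro x y hx hy p hpl hne
  have hn0 : p.length ≠ 0 := by
    intro h0
    have := SimpleGraph.Walk.eq_of_length_eq_zero h0
    exact hne (congrArg Subtype.val this).symm
  have hpnil : ¬ p.Nil := by
    rw [SimpleGraph.Walk.nil_iff_length_eq]; exact hn0
  obtain ⟨z', hadj, p', hp'⟩ := SimpleGraph.Walk.not_nil_iff.mp hpnil
  obtain ⟨z, hz⟩ := z'
  have hyz : G.Adj y z := hadj
  have hn : p'.length + 1 = n := by
    rw [← hpl, hp', SimpleGraph.Walk.length_cons]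
  by_cases hzx : z = x
  · subst hzx
    have h1 : G.dist z y = G.dist y z := SimpleGraph.dist_comm
    have h2 : G.dist y z = 1 := SimpleGraph.dist_eq_one_iff_adj.mpr hyz
    have h3 : G.dist z z = 0 := SimpleGraph.dist_self
    exact ⟨z, hz, hyz.symm, by omega, SimpleGraph.Walk.nil,
      by rw [SimpleGraph.Walk.length_nil]; omega⟩
  · obtain ⟨u', hu', hadj_uz, hdist_u', q', hq'⟩ :=
      IH p'.length (by omega) x z hx hz p' rfl (fun h => hzx h.symm)
    rcases step_dist hG hyz x with hcase | hcase
    · -- dist x y + 1 = dist x z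
      by_cases huy : u' = y
      · subst huy
        obtain ⟨u, hu, h1, h2, q, hq⟩ :=
          IH q'.length (by omega) x u' hx hu' q' rfl hne
        exact ⟨u, hu, h1, h2, q, by omega⟩
      · -- u' ≠ y, so dist u' y = 2
        have hzu1 : G.dist u' z = 1 := SimpleGraph.dist_eq_one_iff_adj.mpr hadj_uz
        have hzy1 : G.dist y z = 1 := SimpleGraph.dist_eq_one_iff_adj.mpr hyz
        have hc1 : G.dist z u' = G.dist u' z := SimpleGraph.dist_comm
        have hc2 : G.dist z y = G.dist y z := SimpleGraph.dist_comm
        have hnadj : ¬ G.Adj u' y := by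
          intro hadj_uy
          rcases step_dist hG hadj_uy z with hh | hh <;> omega
        have htri : G.dist u' y ≤ G.dist u' z + G.dist z y := hG.1.dist_triangle
        have hne0 : G.dist u' y ≠ 0 := fun h => huy ((hG.1.dist_eq_zero_iff).mp h)
        have hne1 : G.dist u' y ≠ 1 := fun h =>
          hnadj (SimpleGraph.dist_eq_one_iff_adj.mp h)
        have huy2 : G.dist u' y = 2 := by omega
        obtain ⟨m, e1, e2, e3⟩ := median_dists hG x u' y
        have hcm : G.dist u' m = G.dist m u' := SimpleGraph.dist_comm
        have hxypos : 0 < G.dist x y := hG.1.pos_dist_of_ne hne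
        have hmy1 : G.dist m y = 1 := by omega
        have hmu1 : G.dist m u' = 1 := by omega
        have hxm : G.dist x m + 1 = G.dist x y := by omega
        have hmH : m ∈ H := h2c u' hu' y hy huy2 e2
        have hadj_mu : (G.induce H).Adj ⟨m, hmH⟩ ⟨u', hu'⟩ := by
          simp only [SimpleGraph.comap_adj, Function.Embedding.coe_subtype]
          exact SimpleGraph.dist_eq_one_iff_adj.mp hmu1
        exact ⟨m, hmH, SimpleGraph.dist_eq_one_iff_adj.mp hmy1, hxm,
          SimpleGraph.Walk.cons hadj_mu q',
          by rw [SimpleGraph.Walk.length_cons]; omega⟩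
    · -- dist x z + 1 = dist x y : take u = z
      exact ⟨z, hz, hyz.symm, by omega, p', by omega⟩

private lemma conv (hG : IsMedianGraph G) {H : Set V}
    (hconn : (G.induce H).Connected)
    (h2c : ∀ x ∈ H, ∀ y ∈ H, G.dist x y = 2 → gInterval G x y ⊆ H) :
    ∀ k x y, x ∈ H → y ∈ H → G.dist x y = k → gInterval G x y ⊆ H := by
  intro k
  induction k using Nat.strong_induction_on with
  | _ k IH =>
  intro x y hx hy hk w hw
  have hw' : G.dist x w + G.dist w y = k := by rw [← hk]; exact hw
  by_cases hi0 : G.dist x w = 0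
  · have : x = w := (hG.1.dist_eq_zero_iff).mp hi0
    rw [← this]; exact hx
  by_cases hj0 : G.dist w y = 0
  · have : w = y := (hG.1.dist_eq_zero_iff).mp hj0
    rw [this]; exact hy
  -- now 1 ≤ i, j, so k ≥ 2
  by_cases hk2 : k = 2
  · exact h2c x hx y hy (hk.trans (by rw [hk2])) hw
  have hk3 : 3 ≤ k := by omega
  have hxyne : x ≠ y := by
    intro h; rw [h, SimpleGraph.dist_self] at hk; omega
  set i := G.dist x w with hi
  set j := G.dist w y with hj
  by_cases hi1 : i = 1
  · -- use a neighbor u' of x on a geodesic to y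
    obtain ⟨p⟩ := hconn.preconnected ⟨x, hx⟩ ⟨y, hy⟩
    obtain ⟨u', hu', hadj_ux, hdist_u', -⟩ :=
      iso hG h2c p.length y x hy hx p rfl (fun h => hxyne h.symm)
    have hcyx : G.dist y x = G.dist x y := SimpleGraph.dist_comm
    have hwx : G.dist w x = G.dist x w := SimpleGraph.dist_comm
    rcases step_dist hG hadj_ux w with hcase | hcase
    · -- dist w u' + 1 = dist w x = 1, so w = u'
      have h0 : G.dist w u' = 0 := by omega
      have : w = u' := (hG.1.dist_eq_zero_iff).mp h0
      rw [this]; exact hu'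
    · -- dist w u' = 2
      have hwu2 : G.dist w u' = 2 := by omega
      obtain ⟨m, e1, e2, e3⟩ := median_dists hG y w u'
      have hyw : G.dist y w = G.dist w y := SimpleGraph.dist_comm
      have hcm : G.dist w m = G.dist m w := SimpleGraph.dist_comm
      have hmw1 : G.dist m w = 1 := by omega
      have hym : G.dist y m = k - 2 := by omega
      have hyu : G.dist y u' = k - 1 := by omega
      have hmH : m ∈ H := IH (k - 1) (by omega) y u' hy hu' hyu e3
      have ht1 : G.dist x m ≤ G.dist x w + G.dist w m := hG.1.dist_triangle
      have ht2 : G.dist x y ≤ G.dist x m + G.dist m y := hG.1.dist_triangle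
      have hmy : G.dist m y = G.dist y m := SimpleGraph.dist_comm
      have hxm2 : G.dist x m = 2 := by omega
      have hwmem : w ∈ gInterval G x m := by
        show G.dist x w + G.dist w m = G.dist x m
        omega
      exact h2c x hx m hmH hxm2 hwmem
  · -- i ≥ 2
    obtain ⟨p⟩ := hconn.preconnected ⟨y, hy⟩ ⟨x, hx⟩
    obtain ⟨u, hu, hadj_uy, hdist_u, -⟩ :=
      iso hG h2c p.length x y hx hy p rfl hxyne
    rw [hk] at hdist_u
    rcases step_dist hG hadj_uy w with hcase | hcase
    · -- dist w u + 1 = dist w y = j, so w ∈ I(x, u)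
      have hxu : G.dist x u = k - 1 := by omega
      have hwmem : w ∈ gInterval G x u := by
        show G.dist x w + G.dist w u = G.dist x u
        omega
      exact IH (k - 1) (by omega) x u hx hu hxu hwmem
    · -- dist w u = j + 1
      obtain ⟨m, e1, e2, e3⟩ := median_dists hG x w u
      have hcm : G.dist w m = G.dist m w := SimpleGraph.dist_comm
      have hxu : G.dist x u = k - 1 := by omega
      have hmw1 : G.dist m w = 1 := by omega
      have hxm : G.dist x m = i - 1 := by omega
      have hmH : m ∈ H := IH (k - 1) (by omega) x u hx hu hxu e3
      have ht1 : G.dist m y ≤ G.dist m w + G.dist w y := hG.1.dist_triangle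
      have ht2 : G.dist x y ≤ G.dist x m + G.dist m y := hG.1.dist_triangle
      have hmy : G.dist m y = j + 1 := by omega
      have hwmem : w ∈ gInterval G m y := by
        show G.dist m w + G.dist w y = G.dist m y
        omega
      exact IH (j + 1) (by omega) m y hmH hy hmy hwmem

end Aux

/-- A connected subgraph `H` of a median graph `G` is convex if and only if it is
2-convex: every metric interval between points of `H` at distance 2 lies in `H`. -/
theorem convex_iff_two_convex {V : Type} (G : SimpleGraph V) (hG : IsMedianGraph G)
    (H : Set V) (hconn : (G.induce H).Connected) :
    GConvex G H ↔
      ∀ x ∈ H, ∀ y ∈ H, G.dist x y = 2 → gInterval G x y ⊆ H := by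
  constructor
  · intro hconv x hx y hy _
    exact hconv x hx y hy
  · intro h2c x hx y hy
    exact conv hG hconn h2c (G.dist x y) x y hx hy rfl
end

section
/- Every convex connected subgraph of a median graph is gated: for every vertex x of G there exists x₀ ∈ H such that d(x,a) = d(x,x₀) + d(x₀,a) for all a ∈ H. -/
/-- `x₀` is a gate of `x` in the vertex set `H` (w.r.t. the path metric). -/
def IsGraphGate {V : Type} (G : SimpleGraph V) (H : Set V) (x x₀ : V) : Prop :=
  x₀ ∈ H ∧ ∀ a ∈ H, G.dist x a = G.dist x x₀ + G.dist x₀ a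

/-- Every (nonempty) convex connected subgraph of a median graph is gated. -/
theorem convex_subgraph_gated {V : Type} (G : SimpleGraph V) (hG : IsMedianGraph G)
    (H : Set V) (hne : H.Nonempty) (hconn : (G.induce H).Connected)
    (hconv : GConvex G H) :
    ∀ x : V, ∃ x₀ : V, IsGraphGate G H x x₀ := by
  obtain ⟨hGconn, hmed⟩ := hG
  intro x
  -- choose x₀ ∈ H minimizing the distance to x
  have hSne : ((fun a => G.dist x a) '' H).Nonempty := hne.image _
  obtain ⟨x₀, hx₀H, hx₀d⟩ := Nat.sInf_mem hSne
  have hmin : ∀ a ∈ H, G.dist x x₀ ≤ G.dist x a := by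
    intro a ha
    have : G.dist x x₀ = sInf ((fun a => G.dist x a) '' H) := hx₀d
    rw [this]
    exact Nat.sInf_le ⟨a, ha, rfl⟩
  refine ⟨x₀, hx₀H, ?_⟩
  intro a ha
  obtain ⟨m, ⟨hm1, hm2, hm3⟩, _⟩ := hmed x x₀ a
  simp only [gInterval, Set.mem_setOf_eq] at hm1 hm3
  -- m ∈ interval x₀ a ⊆ H
  have hmH : m ∈ H := hconv x₀ hx₀H a ha hm2
  -- from hm1 : d x m + d m x₀ = d x x₀ and minimality, d m x₀ = 0
  have hle : G.dist x x₀ ≤ G.dist x m := hmin m hmH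
  have h0 : G.dist m x₀ = 0 := by omega
  have hmx₀ : m = x₀ := by
    have hr : G.Reachable m x₀ := hGconn m x₀
    exact (SimpleGraph.Reachable.dist_eq_zero_iff hr).mp h0
  rw [hmx₀] at hm3
  exact hm3.symm
end

section
/- Let X be a metric space and A, A' ⊆ X two gated subsets with gate maps p : X → A and p' : X → A'. Then p' ∘ p ∘ p' = p' on A. -/
/-- `a` is the gate of `x` in the subset `A` of a metric space. -/
def IsGate {X : Type} [MetricSpace X] (A : Set X) (x a : X) : Prop :=
  a ∈ A ∧ ∀ b ∈ A, dist x b = dist x a + dist a b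

/-- If `A`, `A'` are gated subsets of a metric space with gate maps `p`, `p'`,
then `p' ∘ p ∘ p' = p'` on `A`. -/
theorem gate_comp_gate {X : Type} [MetricSpace X] (A A' : Set X) (p p' : X → X)
    (hp : ∀ x, IsGate A x (p x)) (hp' : ∀ x, IsGate A' x (p' x)) :
    ∀ a ∈ A, p' (p (p' a)) = p' a := by
  intro a ha
  set b := p' a with hb
  set c := p b with hc
  set d := p' c with hd
  -- gate of a in A' applied to d ∈ A'
  have h1 : dist a d = dist a b + dist b d := (hp' a).2 d (hp' c).1
  -- gate of b in A applied to a ∈ A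
  have h2 : dist b a = dist b c + dist c a := (hp b).2 a ha
  -- gate of c in A' applied to b ∈ A'
  have h3 : dist c b = dist c d + dist d b := (hp' c).2 b (hp' a).1
  have htri : dist a d ≤ dist a c + dist c d := dist_triangle a c d
  have e1 : dist b a = dist a b := dist_comm b a
  have e2 : dist c a = dist a c := dist_comm c a
  have e3 : dist c b = dist b c := dist_comm c b
  have e4 : dist d b = dist b d := dist_comm d b
  have hbd : dist b d ≤ 0 := by linarith
  have : dist b d = 0 := le_antisymm hbd dist_nonneg
  exact (eq_of_dist_eq_zero this).symm
end

section
/- Let Σ = (x₀, …, x_{n+2}) be a taut string in a cube complex of dimension at most n, equipped with the l∞ metric on cubes. Then the length of Σ is at least 1. -/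
open scoped ENNReal

/-- A point of `ℝ^n` lying in the unit cube `[0,1]^n`. -/
def InUnitCube {n : ℕ} (x : Fin n → ℝ) : Prop := ∀ l, x l ∈ Set.Icc (0 : ℝ) 1

/-- A face of the cube `[0,1]^n` is encoded by `c : Fin n → Option Bool`:
`some b` freezes the coordinate at `0` or `1`, `none` leaves it free. -/
def facePoints {n : ℕ} (c : Fin n → Option Bool) : Set (Fin n → ℝ) :=
  {x | ∀ l, (∀ b, c l = some b → x l = (if b then 1 else 0)) ∧
            (c l = none → x l ∈ Set.Icc (0 : ℝ) 1)}

/-- A cubical isometry between faces of cubes: a bijection of the free coordinates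
together with possible reflections. Such maps are isometries for every `l_p`-norm. -/
def IsCubicalIso {n₁ n₂ : ℕ} (c₁ : Fin n₁ → Option Bool) (c₂ : Fin n₂ → Option Bool)
    (h : (Fin n₁ → ℝ) → (Fin n₂ → ℝ)) : Prop :=
  ∃ (σ : {l₂ : Fin n₂ // c₂ l₂ = none} → {l₁ : Fin n₁ // c₁ l₁ = none})
    (fl : {l₂ : Fin n₂ // c₂ l₂ = none} → Bool),
    Function.Bijective σ ∧
    ∀ x ∈ facePoints c₁,
      (∀ l₂ b, c₂ l₂ = some b → h x l₂ = (if b then 1 else 0)) ∧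
      (∀ (l₂ : Fin n₂) (hl : c₂ l₂ = none),
        h x l₂ = if fl ⟨l₂, hl⟩ then 1 - x (σ ⟨l₂, hl⟩).1 else x (σ ⟨l₂, hl⟩).1)

/-- A cube complex: a family of unit cubes glued along faces by cubical isometries.
The relation `rel` identifies points of the disjoint union of the cubes; it is an
equivalence relation on the points of the unit cubes, injective on each cube, and
any two glued cubes are glued along a pair of faces via a cubical isometry. -/
structure CubeComplex where
  idx : Type
  dim : idx → ℕ
  rel : (Σ i : idx, Fin (dim i) → ℝ) → (Σ i : idx, Fin (dim i) → ℝ) → Prop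
  rel_inCube : ∀ a b, rel a b → InUnitCube a.2 ∧ InUnitCube b.2
  rel_refl : ∀ a : Σ i : idx, Fin (dim i) → ℝ, InUnitCube a.2 → rel a a
  rel_symm : ∀ a b, rel a b → rel b a
  rel_trans : ∀ a b c, rel a b → rel b c → rel a c
  rel_inj : ∀ (i : idx) (x y : Fin (dim i) → ℝ), rel ⟨i, x⟩ ⟨i, y⟩ → x = y
  rel_glue : ∀ i j : idx, (∃ x y, rel ⟨i, x⟩ ⟨j, y⟩) →
    ∃ (c₁ : Fin (dim i) → Option Bool) (c₂ : Fin (dim j) → Option Bool)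
      (h : (Fin (dim i) → ℝ) → (Fin (dim j) → ℝ)),
      IsCubicalIso c₁ c₂ h ∧
      ∀ x y, InUnitCube x → InUnitCube y →
        (rel ⟨i, x⟩ ⟨j, y⟩ ↔ x ∈ facePoints c₁ ∧ h x = y)

namespace CubeComplex

variable (C : CubeComplex)

/-- The points of the cubes of the complex. -/
def PrePt : Type := {a : Σ i : C.idx, Fin (C.dim i) → ℝ // InUnitCube a.2}

/-- The gluing equivalence relation as a setoid. -/
def setoid : Setoid C.PrePt :=
  ⟨fun a b => C.rel a.1 b.1,
    ⟨fun a => C.rel_refl a.1 a.2, fun h => C.rel_symm _ _ h,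
      fun h h' => C.rel_trans _ _ _ h h'⟩⟩

/-- The geometric realization `|𝒞|` of the cube complex. -/
def Pts : Type := Quotient C.setoid

/-- The point of `|𝒞|` given by coordinates `x` in the cube `i`. -/
def pt (i : C.idx) (x : Fin (C.dim i) → ℝ) (hx : InUnitCube x) : C.Pts :=
  Quotient.mk C.setoid ⟨⟨i, x⟩, hx⟩

end CubeComplex

/-- The `l_p` distance on `ℝ^n`, `p ∈ [1,∞]`. -/
noncomputable def lpDist (p : ℝ≥0∞) {n : ℕ} (x y : Fin n → ℝ) : ℝ :=
  if p = ∞ then ⨆ l, |x l - y l|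
  else (∑ l, |x l - y l| ^ p.toReal) ^ (1 / p.toReal)

namespace CubeComplex

variable (C : CubeComplex)

/-- A string from `a` to `b` whose segments lie in cubes indexed in `A`: a chain of
pairs of points, each pair lying in a common cube, consecutive pairs matching up. -/
structure StringIn (A : Set C.idx) (a b : C.Pts) where
  m : ℕ
  cube : Fin m → C.idx
  s : ∀ k : Fin m, Fin (C.dim (cube k)) → ℝ
  e : ∀ k : Fin m, Fin (C.dim (cube k)) → ℝ
  hs : ∀ k, InUnitCube (s k)
  he : ∀ k, InUnitCube (e k)
  hA : ∀ k, cube k ∈ A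
  hnil : m = 0 → a = b
  hstart : ∀ h0 : 0 < m, C.pt (cube ⟨0, h0⟩) (s ⟨0, h0⟩) (hs ⟨0, h0⟩) = a
  hend : ∀ h0 : 0 < m,
    C.pt (cube ⟨m - 1, Nat.sub_lt h0 Nat.one_pos⟩) (e ⟨m - 1, Nat.sub_lt h0 Nat.one_pos⟩)
      (he ⟨m - 1, Nat.sub_lt h0 Nat.one_pos⟩) = b
  hlink : ∀ (k : ℕ) (h1 : k + 1 < m),
    C.pt (cube ⟨k, Nat.lt_of_succ_lt h1⟩) (e ⟨k, Nat.lt_of_succ_lt h1⟩)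
        (he ⟨k, Nat.lt_of_succ_lt h1⟩) =
      C.pt (cube ⟨k + 1, h1⟩) (s ⟨k + 1, h1⟩) (hs ⟨k + 1, h1⟩)

/-- The `l_p`-length of a string. -/
noncomputable def StringIn.length {C : CubeComplex} {A : Set C.idx} {a b : C.Pts}
    (p : ℝ≥0∞) (S : C.StringIn A a b) : ℝ :=
  ∑ k : Fin S.m, lpDist p (S.s k) (S.e k)

/-- The induced length metric restricted to strings in the cubes indexed by `A`. -/
noncomputable def distIn (p : ℝ≥0∞) (A : Set C.idx) (a b : C.Pts) : ℝ :=
  sInf {r | ∃ S : C.StringIn A a b, S.length p = r}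

/-- The induced length metric `d_p` on `|𝒞|`. -/
noncomputable def stringDist (p : ℝ≥0∞) (a b : C.Pts) : ℝ :=
  C.distIn p Set.univ a b

/-- The complex has dimension at most `n`. -/
def DimLE (n : ℕ) : Prop := ∀ i, C.dim i ≤ n

end CubeComplex

namespace CubeComplex

variable (C : CubeComplex)

/-- A taut `m`-string `(x₀,…,x_m)` in a cube complex with the `l_∞` metric on the
cubes.  For each `k`, `s k` and `e k` are the coordinates of `x_k` and `x_{k+1}`
in the maximal cube `cube k` containing both.  The coordinates of consecutive
cubes are matched along their common face by `σ` (with the common face placed at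
the origin, so unmatched "new" coordinates vanish at `x_{k+1}`).  Tautness:
(i) no cube contains three consecutive points, (ii) each `x_{k+1}` lies on a
shortest path from `x_k` to `x_{k+2}` inside the union of the two adjacent cubes,
and (iii) the coordinates are monotone along the string. -/
structure TautString (m : ℕ) where
  cube : Fin m → C.idx
  s : ∀ k : Fin m, Fin (C.dim (cube k)) → ℝ
  e : ∀ k : Fin m, Fin (C.dim (cube k)) → ℝ
  hs : ∀ k, InUnitCube (s k)
  he : ∀ k, InUnitCube (e k)
  /-- consecutive segments match up in the realization -/
  hlink : ∀ (k : ℕ) (h1 : k + 1 < m),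
    C.rel ⟨cube ⟨k, Nat.lt_of_succ_lt h1⟩, e ⟨k, Nat.lt_of_succ_lt h1⟩⟩
      ⟨cube ⟨k + 1, h1⟩, s ⟨k + 1, h1⟩⟩
  /-- each cube is a maximal cube containing its two points -/
  hmax : ∀ (k : Fin m) (j : C.idx) (u v : Fin (C.dim j) → ℝ),
    C.rel ⟨j, u⟩ ⟨cube k, s k⟩ → C.rel ⟨j, v⟩ ⟨cube k, e k⟩ →
      C.dim j ≤ C.dim (cube k)
  /-- the coordinate matching along the common face of consecutive cubes -/
  σ : ∀ (k : ℕ) (h1 : k + 1 < m),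
    Fin (C.dim (cube ⟨k + 1, h1⟩)) → Option (Fin (C.dim (cube ⟨k, Nat.lt_of_succ_lt h1⟩)))
  hσinj : ∀ (k : ℕ) (h1 : k + 1 < m) (l l' : Fin (C.dim (cube ⟨k + 1, h1⟩))) l₀,
    σ k h1 l = some l₀ → σ k h1 l' = some l₀ → l = l'
  /-- matched coordinates of `x_{k+1}` agree in both cubes; new coordinates are 0 -/
  hcoord : ∀ (k : ℕ) (h1 : k + 1 < m) (l : Fin (C.dim (cube ⟨k + 1, h1⟩))),
    (σ k h1 l = none → s ⟨k + 1, h1⟩ l = 0) ∧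
    ∀ l₀, σ k h1 l = some l₀ → s ⟨k + 1, h1⟩ l = e ⟨k, Nat.lt_of_succ_lt h1⟩ l₀
  /-- the face of the new cube where all new coordinates vanish is the glued face -/
  hface : ∀ (k : ℕ) (h1 : k + 1 < m) (x : Fin (C.dim (cube ⟨k + 1, h1⟩)) → ℝ),
    InUnitCube x → (∀ l, σ k h1 l = none → x l = 0) →
      ∃ x' : Fin (C.dim (cube ⟨k, Nat.lt_of_succ_lt h1⟩)) → ℝ, InUnitCube x' ∧
        C.rel ⟨cube ⟨k, Nat.lt_of_succ_lt h1⟩, x'⟩ ⟨cube ⟨k + 1, h1⟩, x⟩ ∧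
        ∀ l l₀, σ k h1 l = some l₀ → x' l₀ = x l
  /-- (iii) monotone coordinates -/
  hmono : ∀ (k : Fin m) (l : Fin (C.dim (cube k))), s k l ≤ e k l
  /-- (i) no cube contains three consecutive points of the string -/
  hno3 : ∀ (k : ℕ) (h1 : k + 1 < m),
    ¬ ∃ (j : C.idx) (u v w : Fin (C.dim j) → ℝ),
      C.rel ⟨j, u⟩ ⟨cube ⟨k, Nat.lt_of_succ_lt h1⟩, s ⟨k, Nat.lt_of_succ_lt h1⟩⟩ ∧
      C.rel ⟨j, v⟩ ⟨cube ⟨k + 1, h1⟩, s ⟨k + 1, h1⟩⟩ ∧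
      C.rel ⟨j, w⟩ ⟨cube ⟨k + 1, h1⟩, e ⟨k + 1, h1⟩⟩
  /-- (ii) `x_{k+1}` lies in the interval `I_{L}(x_k, x_{k+2})` for the length
  metric of `L`, the union of the two consecutive cubes -/
  hinterval : ∀ (k : ℕ) (h1 : k + 1 < m),
    C.distIn ⊤ {cube ⟨k, Nat.lt_of_succ_lt h1⟩, cube ⟨k + 1, h1⟩}
        (C.pt (cube ⟨k, Nat.lt_of_succ_lt h1⟩) (s ⟨k, Nat.lt_of_succ_lt h1⟩)
          (hs ⟨k, Nat.lt_of_succ_lt h1⟩))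
        (C.pt (cube ⟨k + 1, h1⟩) (s ⟨k + 1, h1⟩) (hs ⟨k + 1, h1⟩)) +
      C.distIn ⊤ {cube ⟨k, Nat.lt_of_succ_lt h1⟩, cube ⟨k + 1, h1⟩}
        (C.pt (cube ⟨k + 1, h1⟩) (s ⟨k + 1, h1⟩) (hs ⟨k + 1, h1⟩))
        (C.pt (cube ⟨k + 1, h1⟩) (e ⟨k + 1, h1⟩) (he ⟨k + 1, h1⟩)) =
    C.distIn ⊤ {cube ⟨k, Nat.lt_of_succ_lt h1⟩, cube ⟨k + 1, h1⟩}
        (C.pt (cube ⟨k, Nat.lt_of_succ_lt h1⟩) (s ⟨k, Nat.lt_of_succ_lt h1⟩)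
          (hs ⟨k, Nat.lt_of_succ_lt h1⟩))
        (C.pt (cube ⟨k + 1, h1⟩) (e ⟨k + 1, h1⟩) (he ⟨k + 1, h1⟩))

/-- The `l_∞`-length of a taut string. -/
noncomputable def TautString.length {C : CubeComplex} {m : ℕ} (T : C.TautString m) : ℝ :=
  ∑ k : Fin m, lpDist ⊤ (T.s k) (T.e k)

end CubeComplex

/-!
Suppose the string had length less than `1`. Along a string with monotone coordinates,
a coordinate that has become positive stays positive and, being bounded by the length
travelled so far, below `1`; so it is a free coordinate of
the common face of the next two cubes and is carried over into the next cube. Tautness (i)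
says that `x_{k+2}` is not on the common face of cubes `k` and `k + 1`, so each step also
makes a fresh coordinate positive. Hence the cube of the `k`-th segment has at least `k`
positive coordinates, and the last cube of an `(n+2)`-string would have dimension at
least `n + 1`.
-/

open Function Finset

lemma lpDist_top_eq_iSup {n : ℕ} (x y : Fin n → ℝ) : lpDist ⊤ x y = ⨆ l, |x l - y l| :=
  if_pos rfl

lemma lpDist_top_nonneg {n : ℕ} (x y : Fin n → ℝ) : 0 ≤ lpDist ⊤ x y := by
  rw [lpDist_top_eq_iSup]
  exact Real.iSup_nonneg fun l => abs_nonneg _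

lemma abs_sub_le_lpDist_top {n : ℕ} (x y : Fin n → ℝ) (l : Fin n) :
    |x l - y l| ≤ lpDist ⊤ x y := by
  rw [lpDist_top_eq_iSup]
  exact le_ciSup (f := fun l => |x l - y l|) (Set.finite_range _).bddAbove l

lemma apply_le_apply_add_lpDist_top {n : ℕ} (x y : Fin n → ℝ) (l : Fin n) :
    y l ≤ x l + lpDist ⊤ x y := by
  have := abs_sub_le_lpDist_top x y l
  rw [abs_sub_comm] at this
  linarith [le_abs_self (y l - x l)]

lemma eq_none_of_mem_facePoints_of_mem_Ioo {n : ℕ} {c : Fin n → Option Bool}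
    {x : Fin n → ℝ} (hx : x ∈ facePoints c) {l : Fin n} (hl : x l ∈ Set.Ioo 0 1) :
    c l = none := by
  cases hc : c l with
  | none => rfl
  | some b =>
    have := (hx l).1 b hc
    cases b <;> simp only [Bool.false_eq_true, if_false, if_true] at this <;>
      linarith [hl.1, hl.2]

lemma eq_none_of_mem_facePoints_of_apply_ne {n : ℕ} {c : Fin n → Option Bool}
    {x y : Fin n → ℝ} (hx : x ∈ facePoints c) (hy : y ∈ facePoints c) {l : Fin n}
    (hl : x l ≠ y l) : c l = none := by
  cases hc : c l with
  | none => rfl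
  | some b => exact absurd (((hx l).1 b hc).trans ((hy l).1 b hc).symm) hl

lemma IsCubicalIso.exists_coord_embedding {n₁ n₂ : ℕ} {c₁ : Fin n₁ → Option Bool}
    {c₂ : Fin n₂ → Option Bool} {h : (Fin n₁ → ℝ) → (Fin n₂ → ℝ)}
    (hiso : IsCubicalIso c₁ c₂ h) :
    ∃ (τ : {l // c₁ l = none} → Fin n₂) (fl : {l // c₁ l = none} → Bool), Injective τ ∧
      ∀ x ∈ facePoints c₁, ∀ l, h x (τ l) = if fl l then 1 - x l else x l := by
  obtain ⟨σ, fl, hbij, hspec⟩ := hiso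
  let e := Equiv.ofBijective σ hbij
  refine ⟨fun l => (e.symm l).1, fun l => fl (e.symm l),
    Subtype.val_injective.comp e.symm.injective, fun x hx l => ?_⟩
  have := (hspec x hx).2 (e.symm l).1 (e.symm l).2
  have hσe : σ (e.symm l) = l := e.apply_symm_apply l
  simpa only [Subtype.coe_eta, hσe] using this

namespace CubeComplex.TautString

variable {C : CubeComplex} {m : ℕ} (T : C.TautString m)

noncomputable def segLength (k : ℕ) : ℝ :=
  if hk : k < m then lpDist ⊤ (T.s ⟨k, hk⟩) (T.e ⟨k, hk⟩) else 0

lemma segLength_of_lt {k : ℕ} (hk : k < m) :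
    T.segLength k = lpDist ⊤ (T.s ⟨k, hk⟩) (T.e ⟨k, hk⟩) :=
  dif_pos hk

lemma segLength_nonneg (k : ℕ) : 0 ≤ T.segLength k := by
  unfold segLength
  split_ifs
  exacts [lpDist_top_nonneg _ _, le_rfl]

lemma length_eq_sum_range_segLength : T.length = ∑ k ∈ range m, T.segLength k := by
  rw [length, ← Fin.sum_univ_eq_sum_range]
  exact sum_congr rfl fun k _ => (T.segLength_of_lt k.2).symm

lemma sum_range_segLength_le_length {k : ℕ} (hk : k ≤ m) :
    ∑ j ∈ range k, T.segLength j ≤ T.length := by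
  rw [length_eq_sum_range_segLength]
  exact sum_le_sum_of_subset_of_nonneg (range_subset_range.mpr hk)
    fun j _ _ => T.segLength_nonneg j

lemma e_le_s_add_segLength {k : ℕ} (hk : k < m) (l : Fin (C.dim (T.cube ⟨k, hk⟩))) :
    T.e ⟨k, hk⟩ l ≤ T.s ⟨k, hk⟩ l + T.segLength k := by
  rw [T.segLength_of_lt hk]
  exact apply_le_apply_add_lpDist_top _ _ l

lemma exists_σ_eq_none_and_pos (k : ℕ) (h1 : k + 1 < m) :
    ∃ l, T.σ k h1 l = none ∧ 0 < T.e ⟨k + 1, h1⟩ l := by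
  by_contra! hnew
  have hzero : ∀ l, T.σ k h1 l = none → T.e ⟨k + 1, h1⟩ l = 0 := fun l hl =>
    le_antisymm (hnew l hl) (T.he ⟨k + 1, h1⟩ l).1
  obtain ⟨x', -, hrel, -⟩ := T.hface k h1 (T.e ⟨k + 1, h1⟩) (T.he ⟨k + 1, h1⟩) hzero
  exact T.hno3 k h1 ⟨_, _, _, x', C.rel_refl _ (T.hs _), T.hlink k h1, hrel⟩

lemma exists_rel_update_of_σ_eq_some (k : ℕ) (h1 : k + 1 < m)
    {l₂ : Fin (C.dim (T.cube ⟨k + 1, h1⟩))} {l₁ : Fin (C.dim (T.cube ⟨k, Nat.lt_of_succ_lt h1⟩))}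
    (hσ : T.σ k h1 l₂ = some l₁) {t : ℝ} (ht : t ∈ Set.Icc 0 1) :
    ∃ x', C.rel ⟨T.cube ⟨k, Nat.lt_of_succ_lt h1⟩, x'⟩
        ⟨T.cube ⟨k + 1, h1⟩, update (T.s ⟨k + 1, h1⟩) l₂ t⟩ ∧ x' l₁ = t := by
  have hunit : InUnitCube (update (T.s ⟨k + 1, h1⟩) l₂ t) := by
    intro l
    rcases eq_or_ne l l₂ with rfl | hne
    · rwa [update_self]
    · rw [update_of_ne hne]
      exact T.hs _ l
  have hzero : ∀ l, T.σ k h1 l = none → update (T.s ⟨k + 1, h1⟩) l₂ t l = 0 := by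
    intro l hl
    have hne : l ≠ l₂ := by
      rintro rfl
      simp [hl] at hσ
    rw [update_of_ne hne]
    exact (T.hcoord k h1 l).1 hl
  obtain ⟨x', -, hrel, hmatch⟩ := T.hface k h1 _ hunit hzero
  exact ⟨x', hrel, by rw [hmatch l₂ l₁ hσ, update_self]⟩

lemma exists_σ_eq_some_of_mem_Ioo (k : ℕ) (h1 : k + 1 < m)
    (l₀ : Fin (C.dim (T.cube ⟨k, Nat.lt_of_succ_lt h1⟩)))
    (hl₀ : T.e ⟨k, Nat.lt_of_succ_lt h1⟩ l₀ ∈ Set.Ioo 0 1) :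
    ∃ l, T.σ k h1 l = some l₀ := by
  by_contra! hno
  obtain ⟨c₁, c₂, h, hiso, hglue⟩ := C.rel_glue _ _ ⟨_, _, T.hlink k h1⟩
  obtain ⟨τ, fl, hτ, hτh⟩ := hiso.exists_coord_embedding
  have hface : ∀ {x y}, C.rel ⟨T.cube ⟨k, Nat.lt_of_succ_lt h1⟩, x⟩ ⟨T.cube ⟨k + 1, h1⟩, y⟩ →
      x ∈ facePoints c₁ ∧ h x = y := fun hxy =>
    (hglue _ _ (C.rel_inCube _ _ hxy).1 (C.rel_inCube _ _ hxy).2).mp hxy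
  obtain ⟨he_face, he_h⟩ := hface (T.hlink k h1)
  have hc₀ : c₁ l₀ = none := eq_none_of_mem_facePoints_of_mem_Ioo he_face hl₀
  -- the coordinate `τ l₀` of cube `k + 1` reads `l₀` up to reflection, and `σ` must match it
  have hs : T.s ⟨k + 1, h1⟩ (τ ⟨l₀, hc₀⟩) ≠ 0 := by
    rw [← he_h, hτh _ he_face]
    split_ifs <;> linarith [hl₀.1, hl₀.2]
  obtain ⟨l₁, hσ⟩ := Option.ne_none_iff_exists'.mp fun h => hs ((T.hcoord k h1 _).1 h)
  -- moving that coordinate from `0` to `1` moves coordinate `l₁ ≠ l₀` of cube `k` from `0` to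
  -- `1`, while the gluing lets it move only coordinate `l₀`
  obtain ⟨x₀, hrel₀, hx₀⟩ := T.exists_rel_update_of_σ_eq_some k h1 hσ ⟨le_rfl, zero_le_one⟩
  obtain ⟨x₁, hrel₁, hx₁⟩ := T.exists_rel_update_of_σ_eq_some k h1 hσ ⟨zero_le_one, le_rfl⟩
  obtain ⟨hx₀_face, hx₀_h⟩ := hface hrel₀
  obtain ⟨hx₁_face, hx₁_h⟩ := hface hrel₁
  have hc₁ : c₁ l₁ = none :=
    eq_none_of_mem_facePoints_of_apply_ne hx₀_face hx₁_face (by rw [hx₀, hx₁]; norm_num)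
  have hne : τ ⟨l₁, hc₁⟩ ≠ τ ⟨l₀, hc₀⟩ := fun heq =>
    hno _ (hσ.trans (congrArg (some ∘ Subtype.val) (hτ heq)))
  have h₀ := hτh x₀ hx₀_face ⟨l₁, hc₁⟩
  have h₁ := hτh x₁ hx₁_face ⟨l₁, hc₁⟩
  rw [hx₀_h, update_of_ne hne] at h₀
  rw [hx₁_h, update_of_ne hne] at h₁
  simp only [hx₀, hx₁] at h₀ h₁
  split_ifs at h₀ h₁ <;> linarith

theorem exists_injective_pos_coords (hT : T.length < 1) (k : ℕ) (hk : k < m) :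
    ∃ f : Fin k → Fin (C.dim (T.cube ⟨k, hk⟩)), Injective f ∧
      ∀ a, 0 < T.e ⟨k, hk⟩ (f a) ∧ T.e ⟨k, hk⟩ (f a) ≤ ∑ j ∈ range (k + 1), T.segLength j := by
  induction k with
  | zero => exact ⟨Fin.elim0, fun a => a.elim0, fun a => a.elim0⟩
  | succ k ih =>
    obtain ⟨f, hf, hfe⟩ := ih (Nat.lt_of_succ_lt hk)
    have hlt : ∀ a, T.e _ (f a) < 1 := fun a =>
      (hfe a).2.trans_lt ((T.sum_range_segLength_le_length hk.le).trans_lt hT)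
    choose g hg using fun a => T.exists_σ_eq_some_of_mem_Ioo k hk (f a) ⟨(hfe a).1, hlt a⟩
    obtain ⟨l, hl, hl_pos⟩ := T.exists_σ_eq_none_and_pos k hk
    have hsum_nonneg : 0 ≤ ∑ j ∈ range (k + 1), T.segLength j :=
      sum_nonneg fun j _ => T.segLength_nonneg j
    refine ⟨Fin.cons l g, Fin.cons_injective_iff.mpr ⟨?_, ?_⟩, Fin.cases ?_ fun a => ?_⟩
    · rintro ⟨a, rfl⟩
      simp [hg a] at hl
    · intro a b hab
      exact hf (Option.some_injective _ ((hg a).symm.trans (hab ▸ hg b)))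
    · have hs := (T.hcoord k hk l).1 hl
      have := T.e_le_s_add_segLength hk l
      rw [Fin.cons_zero, sum_range_succ]
      constructor <;> linarith
    · have hs := (T.hcoord k hk (g a)).2 _ (hg a)
      have := T.e_le_s_add_segLength hk (g a)
      have := T.hmono ⟨k + 1, hk⟩ (g a)
      rw [Fin.cons_succ, sum_range_succ]
      constructor <;> linarith [hfe a]

end CubeComplex.TautString

/-- In a cube complex of dimension at most `n` with the `l_∞` metric, every taut
`(n+2)`-string has length at least `1`. -/
theorem tautString_length_ge_one (C : CubeComplex) (n : ℕ) (hdim : C.DimLE n)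
    (T : C.TautString (n + 2)) : 1 ≤ T.length := by
  by_contra! hT
  obtain ⟨f, hf, -⟩ := T.exists_injective_pos_coords hT (n + 1) (by omega)
  have hcard := Fintype.card_le_of_injective f hf
  rw [Fintype.card_fin, Fintype.card_fin] at hcard
  have := hdim (T.cube ⟨n + 1, by omega⟩)
  omega
end

section
/- Let 𝔥 be a hyperplane of a CAT(0) cube complex 𝒞 splitting its underlying median graph G into halfspaces H and H', with H minimal under inclusion among all halfspaces. Then the gate map p' : G → H' restricts to an isomorphism from H onto p'(H), and G is isomorphic to (G \ H) ∪ (p'(H) × {0,1}); moreover p'(H) is a convex subgraph (a cuboid) of G \ H. -/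
/-- A vertex set is a halfspace if it and its complement are nonempty and convex;
in a CAT(0) cube complex these are exactly the sides of hyperplanes. -/
def IsHalfspace {V : Type} (G : SimpleGraph V) (H : Set V) : Prop :=
  H.Nonempty ∧ Hᶜ.Nonempty ∧ GConvex G H ∧ GConvex G Hᶜ

/-- The graph `(G \ H) ∪ (P × {0,1})`: the subgraph induced on `Hᶜ` together with a
second copy of `P ⊆ Hᶜ`, each new vertex matched by an edge to its base vertex. -/
def doubledGraph {V : Type} (G : SimpleGraph V) (H P : Set V) :
    SimpleGraph (↥Hᶜ ⊕ ↥P) :=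
  SimpleGraph.fromRel (fun a b =>
    match a, b with
    | .inl a, .inl b => G.Adj ↑a ↑b
    | .inl a, .inr b => (a : V) = ↑b
    | .inr _, .inl _ => False
    | .inr a, .inr b => G.Adj ↑a ↑b)

open SimpleGraph

variable {V : Type} {G : SimpleGraph V}

theorem gInterval_comm (x y : V) : gInterval G x y = gInterval G y x := by
  ext w
  change _ = _ ↔ _ = _
  rw [dist_comm (u := x) (v := w), dist_comm (u := w) (v := y), dist_comm (u := x) (v := y)]
  omega

theorem gInterval_subset_left (hc : G.Connected) {a b c : V} (hb : b ∈ gInterval G a c) :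
    gInterval G a b ⊆ gInterval G a c := by
  intro w hw
  have t1 : G.dist a c ≤ G.dist a w + G.dist w c := hc.dist_triangle
  have t2 : G.dist w c ≤ G.dist w b + G.dist b c := hc.dist_triangle
  simp only [gInterval, Set.mem_ofPred_eq] at *
  omega

theorem gInterval_subset_right (hc : G.Connected) {a b c : V} (hb : b ∈ gInterval G a c) :
    gInterval G b c ⊆ gInterval G a c := by
  rw [gInterval_comm b, gInterval_comm a]
  exact gInterval_subset_left hc (by rwa [gInterval_comm])

theorem eq_or_eq_of_mem_gInterval_of_adj (hc : G.Connected) {x y w : V} (hxy : G.Adj x y)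
    (hw : w ∈ gInterval G x y) : w = x ∨ w = y := by
  have h1 : G.dist x y = 1 := dist_eq_one_iff_adj.mpr hxy
  simp only [gInterval, Set.mem_ofPred_eq] at hw
  rcases Nat.eq_zero_or_pos (G.dist x w) with h0 | _
  · exact .inl (hc.dist_eq_zero_iff.mp h0).symm
  · exact .inr (hc.dist_eq_zero_iff.mp (by omega))

theorem SimpleGraph.Walk.mem_gInterval_of_length_eq_dist (hc : G.Connected) {x y : V}
    (p : G.Walk x y) (hp : p.length = G.dist x y) {w : V} (hw : w ∈ p.support) :
    w ∈ gInterval G x y := by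
  classical
  have h1 : G.dist x w ≤ (p.takeUntil w hw).length := dist_le _
  have h2 : G.dist w y ≤ (p.dropUntil w hw).length := dist_le _
  have h3 : (p.takeUntil w hw).length + (p.dropUntil w hw).length = p.length := by
    rw [← Walk.length_append, Walk.take_spec]
  have h4 : G.dist x y ≤ G.dist x w + G.dist w y := hc.dist_triangle
  simp only [gInterval, Set.mem_ofPred_eq]
  omega

theorem GConvex.dist_induce (hc : G.Connected) {s : Set V} (hs : GConvex G s) (a b : s) :
    (G.induce s).dist a b = G.dist a b := by
  obtain ⟨p, hp⟩ := hc.exists_walk_length_eq_dist a b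
  have hsupp : ∀ w ∈ p.support, w ∈ s := fun w hw =>
    hs a a.2 b b.2 (p.mem_gInterval_of_length_eq_dist hc hp hw)
  let q : (G.induce s).Walk a b := p.induce s hsupp
  apply le_antisymm
  · calc (G.induce s).dist a b ≤ q.length := dist_le q
      _ = G.dist a b := by
        rw [← hp, ← Walk.length_map (Embedding.induce s).toHom q]
        exact congrArg Walk.length (Walk.map_induce p hsupp)
  · obtain ⟨r, hr⟩ := q.reachable.exists_walk_length_eq_dist
    calc G.dist a b ≤ (r.map (Embedding.induce s).toHom).length := dist_le _
      _ = (G.induce s).dist a b := by rw [Walk.length_map, hr]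

theorem GConvex.gInterval_induce (hc : G.Connected) {s : Set V} (hs : GConvex G s) (a b : s) :
    gInterval (G.induce s) a b = Subtype.val ⁻¹' gInterval G a b := by
  ext w
  simp only [gInterval, Set.mem_ofPred_eq, Set.mem_preimage, hs.dist_induce hc]

/-- `W(u,v)` in the usual notation for median graphs. -/
def closerSet (G : SimpleGraph V) (u v : V) : Set V :=
  {w | G.dist w u < G.dist w v}

theorem IsMedianGraph.dist_ne_of_adj (hG : IsMedianGraph G) {u v : V} (huv : G.Adj u v)
    (w : V) : G.dist w u ≠ G.dist w v := by
  intro he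
  obtain ⟨m, ⟨h1, h2, h3⟩, -⟩ := hG.2 u v w
  simp only [gInterval, Set.mem_ofPred_eq] at h2 h3
  have hwu : G.dist w u = G.dist u w := dist_comm
  have hwv : G.dist w v = G.dist v w := dist_comm
  rcases eq_or_eq_of_mem_gInterval_of_adj hG.1 huv h1 with rfl | rfl
  · rw [dist_eq_one_iff_adj.mpr huv.symm] at h2
    omega
  · rw [dist_eq_one_iff_adj.mpr huv] at h3
    omega

theorem IsMedianGraph.dist_eq_add_one_or (hG : IsMedianGraph G) {u v : V} (huv : G.Adj u v)
    (w : V) : G.dist w v = G.dist w u + 1 ∨ G.dist w u = G.dist w v + 1 := by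
  have := hG.dist_ne_of_adj huv w
  rcases huv.diff_dist_adj (u := w) with h | h | h <;> omega

theorem IsMedianGraph.compl_closerSet (hG : IsMedianGraph G) {u v : V} (huv : G.Adj u v) :
    (closerSet G u v)ᶜ = closerSet G v u := by
  ext w
  have := hG.dist_ne_of_adj huv w
  simp only [closerSet, Set.mem_compl_iff, Set.mem_ofPred_eq]
  omega

theorem SimpleGraph.Adj.mem_gInterval_and_dist_eq (huv : G.Adj u v) (hc : G.Connected)
    {z w : V} (hz : G.dist z u = G.dist z v + 1) (hw : w ∈ gInterval G z v) :
    w ∈ gInterval G z u ∧ G.dist w u = G.dist w v + 1 := by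
  have t1 : G.dist z u ≤ G.dist z w + G.dist w u := hc.dist_triangle
  have t2 : G.dist w u ≤ G.dist w v + G.dist v u := hc.dist_triangle
  rw [dist_eq_one_iff_adj.mpr huv.symm] at t2
  simp only [gInterval, Set.mem_ofPred_eq] at hw ⊢
  omega

theorem IsMedianGraph.gConvex_closerSet (hG : IsMedianGraph G) {u v : V} (huv : G.Adj u v) :
    GConvex G (closerSet G u v) := by
  have hc := hG.1
  have hmed := hG.2
  have side (w : V) : w ∈ closerSet G u v ↔ G.dist w v = G.dist w u + 1 := by
    rcases hG.dist_eq_add_one_or huv w with h | h <;>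
      simp only [closerSet, Set.mem_ofPred_eq] <;> omega
  intro x hx y hy z hzxy
  by_contra hz
  have hz' : G.dist z u = G.dist z v + 1 :=
    (hG.dist_eq_add_one_or huv z).resolve_left fun h => hz ((side z).mpr h)
  -- a median of `x`, `y`, `v` on the side of `v`, found by walking from `z` towards `v`
  obtain ⟨z₁, ⟨hz₁x, hz₁z, hz₁v⟩, -⟩ := hmed x z v
  obtain ⟨-, hz₁⟩ := huv.mem_gInterval_and_dist_eq hc hz' hz₁z
  obtain ⟨z₂, ⟨hz₂y, hz₂z₁, hz₂v⟩, -⟩ := hmed y z₁ v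
  obtain ⟨-, hz₂⟩ := huv.mem_gInterval_and_dist_eq hc hz₁ hz₂z₁
  have hz₁xy : z₁ ∈ gInterval G x y := gInterval_subset_left hc hzxy hz₁x
  have hz₂xy : z₂ ∈ gInterval G x y :=
    gInterval_subset_right hc hz₁xy (by rwa [gInterval_comm])
  have hz₂xv : z₂ ∈ gInterval G x v := gInterval_subset_right hc hz₁v hz₂z₁
  -- the median of `x`, `y`, `u` is also a median of `x`, `y`, `v`, on the side of `u`
  obtain ⟨t, ⟨htxy, hty, htx⟩, -⟩ := hmed x y u
  obtain ⟨htxv, ht⟩ := huv.symm.mem_gInterval_and_dist_eq hc ((side x).mp hx) htx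
  obtain ⟨htyv, -⟩ := huv.symm.mem_gInterval_and_dist_eq hc ((side y).mp hy) hty
  obtain ⟨m, -, huniq⟩ := hmed x y v
  have htz₂ : t = z₂ :=
    (huniq t ⟨htxy, htyv, htxv⟩).trans (huniq z₂ ⟨hz₂xy, hz₂v, hz₂xv⟩).symm
  subst htz₂
  omega

theorem IsMedianGraph.isHalfspace_closerSet (hG : IsMedianGraph G) {u v : V} (huv : G.Adj u v) :
    IsHalfspace G (closerSet G u v) := by
  have h1 : G.dist u v = 1 := dist_eq_one_iff_adj.mpr huv
  have h1' : G.dist v u = 1 := dist_eq_one_iff_adj.mpr huv.symm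
  refine ⟨⟨u, ?_⟩, ⟨v, ?_⟩, hG.gConvex_closerSet huv, ?_⟩
  · simp only [closerSet, Set.mem_ofPred_eq, dist_self, h1, Nat.lt_one_iff]
  · simp only [closerSet, Set.mem_compl_iff, Set.mem_ofPred_eq, dist_self, h1']
    omega
  · rw [hG.compl_closerSet huv]
    exact hG.gConvex_closerSet huv.symm

theorem IsGraphGate.eq_of_adj (hc : G.Connected) {K : Set V} {x g y : V}
    (hg : IsGraphGate G K x g) (hx : x ∉ K) (hy : y ∈ K) (hxy : G.Adj x y) : y = g := by
  have hxg : 0 < G.dist x g := hc.pos_dist_of_ne fun h => hx (h ▸ hg.1)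
  have h := hg.2 y hy
  rw [dist_eq_one_iff_adj.mpr hxy] at h
  exact (hc.dist_eq_zero_iff.mp (by omega)).symm

theorem IsGraphGate.adj_of_minimal (hG : IsMedianGraph G) {H : Set V}
    (hmin : ∀ K : Set V, IsHalfspace G K → K ⊆ H → K = H) {x g : V}
    (hg : IsGraphGate G Hᶜ x g) (hx : x ∈ H) : G.Adj x g := by
  have hc := hG.1
  by_contra hnadj
  have hxg : 1 < G.dist x g := hc.one_lt_dist_of_ne_of_not_adj (fun h => hg.1 (h ▸ hx)) hnadj
  obtain ⟨p, hp⟩ := hc.exists_walk_length_eq_dist x g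
  cases p with
  | nil => exact hg.1 hx
  | @cons _ b _ hxb q =>
    have hxb1 : G.dist x b = 1 := dist_eq_one_iff_adj.mpr hxb
    have hbg : G.dist b g ≤ G.dist x g - 1 := by
      have := dist_le q
      rw [Walk.length_cons] at hp
      omega
    have hbH : b ∈ H := by
      by_contra hb
      have := hg.2 b hb
      omega
    -- every vertex outside `H` is reached from `x` through `g`, hence is closer to `b`
    have hWH : closerSet G x b ⊆ H := by
      intro w hw
      by_contra hwH
      have hgw := hg.2 w hwH
      have t : G.dist w b ≤ G.dist w g + G.dist g b := hc.dist_triangle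
      have c1 : G.dist w x = G.dist x w := dist_comm
      have c2 : G.dist w g = G.dist g w := dist_comm
      have c3 : G.dist g b = G.dist b g := dist_comm
      simp only [closerSet, Set.mem_ofPred_eq] at hw
      omega
    have hbW := hmin _ (hG.isHalfspace_closerSet hxb) hWH ▸ hbH
    simp only [closerSet, Set.mem_ofPred_eq, dist_self] at hbW
    omega

theorem IsMedianGraph.dist_eq_dist_gate (hG : IsMedianGraph G) {H : Set V} (hH : GConvex G H)
    {x y gx gy : V} (hgx : IsGraphGate G Hᶜ x gx) (hgy : IsGraphGate G Hᶜ y gy)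
    (hx : x ∈ H) (hy : y ∈ H) (hxgx : G.Adj x gx) (hygy : G.Adj y gy) :
    G.dist x y = G.dist gx gy := by
  -- the median of `y`, `x`, `gx` lies in `H` and on the edge `x gx`, so it is `x`
  obtain ⟨m, ⟨hmyx, hmxg, hmygx⟩, -⟩ := hG.2 y x gx
  have hmx : m = x := by
    rcases eq_or_eq_of_mem_gInterval_of_adj hG.1 hxgx hmxg with h | h
    · exact h
    · exact absurd (h ▸ hH y hy x hx hmyx) hgx.1
  rw [hmx] at hmygx
  have e := hgy.2 gx hgx.1
  simp only [gInterval, Set.mem_ofPred_eq] at hmygx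
  rw [dist_eq_one_iff_adj.mpr hygy] at e
  rw [dist_eq_one_iff_adj.mpr hxgx, dist_comm (u := y)] at hmygx
  rw [dist_comm (u := gx)]
  omega

theorem IsMedianGraph.mem_image_gate_of_mem_gInterval (hG : IsMedianGraph G) {H : Set V}
    (hH : GConvex G H) {p' : V → V} (hp' : ∀ x, IsGraphGate G Hᶜ x (p' x))
    (hadj : ∀ x ∈ H, G.Adj x (p' x)) {a b w : V} (ha : a ∈ H) (hb : b ∈ H) (hw : w ∈ Hᶜ)
    (hwab : w ∈ gInterval G (p' a) (p' b)) : w ∈ p' '' H := by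
  -- the median `m` of `a`, `b`, `w` lies in `H` at distance one from `w`
  obtain ⟨m, ⟨hmab, hmbw, hmaw⟩, -⟩ := hG.2 a b w
  have hmH : m ∈ H := hH a ha b hb hmab
  have hab := hG.dist_eq_dist_gate hH (hp' a) (hp' b) ha hb (hadj a ha) (hadj b hb)
  have haw := (hp' a).2 w hw
  have hbw := (hp' b).2 w hw
  rw [dist_eq_one_iff_adj.mpr (hadj a ha)] at haw
  rw [dist_eq_one_iff_adj.mpr (hadj b hb)] at hbw
  have c1 : G.dist b m = G.dist m b := dist_comm
  have c2 : G.dist w (p' b) = G.dist (p' b) w := dist_comm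
  simp only [gInterval, Set.mem_ofPred_eq] at hmab hmbw hmaw hwab
  have hmw : G.Adj m w := dist_eq_one_iff_adj.mp (by omega)
  exact ⟨m, hmH, ((hp' m).eq_of_adj hG.1 (· hmH) hw hmw).symm⟩

section doubledGraph

variable {H P : Set V}

@[simp] theorem doubledGraph_adj_inl_inl {a b : ↥Hᶜ} :
    (doubledGraph G H P).Adj (.inl a) (.inl b) ↔ G.Adj a b := by
  simp only [doubledGraph, fromRel_adj, ne_eq, Sum.inl.injEq]
  exact ⟨fun h => h.2.elim id .symm, fun h => ⟨fun e => h.ne (congrArg _ e), .inl h⟩⟩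

@[simp] theorem doubledGraph_adj_inr_inr {a b : ↥P} :
    (doubledGraph G H P).Adj (.inr a) (.inr b) ↔ G.Adj a b := by
  simp only [doubledGraph, fromRel_adj, ne_eq, Sum.inr.injEq]
  exact ⟨fun h => h.2.elim id .symm, fun h => ⟨fun e => h.ne (congrArg _ e), .inl h⟩⟩

@[simp] theorem doubledGraph_adj_inl_inr {a : ↥Hᶜ} {b : ↥P} :
    (doubledGraph G H P).Adj (.inl a) (.inr b) ↔ (a : V) = b := by
  simp [doubledGraph]

@[simp] theorem doubledGraph_adj_inr_inl {a : ↥P} {b : ↥Hᶜ} :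
    (doubledGraph G H P).Adj (.inr a) (.inl b) ↔ (a : V) = b := by
  simp [doubledGraph, eq_comm]

theorem nonempty_iso_doubledGraph (f : V → V) (hinj : Set.InjOn f H)
    (hadj : ∀ a ∈ H, ∀ b ∈ H, (G.Adj a b ↔ G.Adj (f a) (f b)))
    (hedge : ∀ a ∈ H, ∀ b ∈ Hᶜ, (G.Adj a b ↔ b = f a)) :
    Nonempty (G ≃g doubledGraph G H (f '' H)) := by
  classical
  let e : V ≃ ↥Hᶜ ⊕ ↥(f '' H) := (Equiv.Set.sumCompl H).symm.trans
    ((Equiv.sumComm _ _).trans (Equiv.sumCongr (Equiv.refl _) (Equiv.Set.imageOfInjOn f H hinj)))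
  have e_mem {x : V} (hx : x ∈ H) : e x = .inr ⟨f x, x, hx, rfl⟩ := by
    simp [e, Equiv.Set.sumCompl_symm_apply_of_mem hx, Equiv.Set.imageOfInjOn]
  have e_notMem {x : V} (hx : x ∉ H) : e x = .inl ⟨x, hx⟩ := by
    simp [e, Equiv.Set.sumCompl_symm_apply_of_notMem hx]
  refine ⟨⟨e, fun {a b} => ?_⟩⟩
  by_cases ha : a ∈ H <;> by_cases hb : b ∈ H
  · simp [e_mem ha, e_mem hb, hadj a ha b hb]
  · simp [e_mem ha, e_notMem hb, hedge a ha b hb, eq_comm]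
  · simp [e_notMem ha, e_mem hb, hedge b hb a ha, G.adj_comm a]
  · simp [e_notMem ha, e_notMem hb]

end doubledGraph

/-- If `H` is a minimal halfspace of a median graph `G` (the side of a hyperplane),
then the gate map `p'` onto `Hᶜ` restricts to an isomorphism of `H` onto `p'(H)`,
`G` is isomorphic to `(G \ H) ∪ (p'(H) × {0,1})`, and `p'(H)` is a convex subgraph
(a cuboid) of `G \ H`. -/
theorem collapse_minimal_halfspace {V : Type} (G : SimpleGraph V)
    (hG : IsMedianGraph G) (H : Set V) (hH : IsHalfspace G H)
    (hmin : ∀ K : Set V, IsHalfspace G K → K ⊆ H → K = H)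
    (p' : V → V) (hp' : ∀ x, IsGraphGate G Hᶜ x (p' x)) :
    (Set.InjOn p' H ∧ ∀ a ∈ H, ∀ b ∈ H, (G.Adj a b ↔ G.Adj (p' a) (p' b))) ∧
    Nonempty (G ≃g doubledGraph G H (p' '' H)) ∧
    GConvex (G.induce Hᶜ) {x : ↥Hᶜ | (x : V) ∈ p' '' H} := by
  obtain ⟨-, -, hHconv, hHcconv⟩ := hH
  have hadj : ∀ x ∈ H, G.Adj x (p' x) := fun x hx => (hp' x).adj_of_minimal hG hmin hx
  have hdist : ∀ a ∈ H, ∀ b ∈ H, G.dist a b = G.dist (p' a) (p' b) := fun a ha b hb =>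
    hG.dist_eq_dist_gate hHconv (hp' a) (hp' b) ha hb (hadj a ha) (hadj b hb)
  have hinj : Set.InjOn p' H := fun a ha b hb hab =>
    hG.1.dist_eq_zero_iff.mp (by rw [hdist a ha b hb, hab, dist_self])
  have hiso : ∀ a ∈ H, ∀ b ∈ H, (G.Adj a b ↔ G.Adj (p' a) (p' b)) := fun a ha b hb => by
    rw [← dist_eq_one_iff_adj, ← dist_eq_one_iff_adj, hdist a ha b hb]
  have hedge : ∀ a ∈ H, ∀ b ∈ Hᶜ, (G.Adj a b ↔ b = p' a) := fun a ha b hb =>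
    ⟨(hp' a).eq_of_adj hG.1 (· ha) hb, fun h => h ▸ hadj a ha⟩
  refine ⟨⟨hinj, hiso⟩, nonempty_iso_doubledGraph p' hinj hiso hedge, ?_⟩
  rintro x ⟨a, ha, hx⟩ y ⟨b, hb, hy⟩ w hw
  rw [hHcconv.gInterval_induce hG.1, Set.mem_preimage, ← hx, ← hy] at hw
  exact hG.mem_image_gate_of_mem_gInterval hHconv hp' hadj ha hb w.2 hw
end

section
/- A collapsible cube complex has finite width; specifically, if 𝒞' = 𝒞 ∪ ⋃_i (ℒ_i × 𝓘) is obtained from 𝒞 by gluing products of subcomplexes with an interval, then width(𝒞') ≤ width(𝒞) + 2. -/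
/-- The 1-skeleton of `𝒞 ∪ ⋃ᵢ (ℒᵢ × [0,1])`: for each `j` a new copy of the
subcomplex `L j` is added, with each new vertex joined to its base vertex. -/
def glueGraph {V : Type} (G : SimpleGraph V) {J : Type} (L : J → Set V) :
    SimpleGraph (V ⊕ Σ j : J, ↥(L j)) :=
  SimpleGraph.fromRel (fun a b =>
    match a, b with
    | .inl a, .inl b => G.Adj a b
    | .inl a, .inr b => a = ↑b.2
    | .inr _, .inl _ => False
    | .inr a, .inr b => a.1 = b.1 ∧ G.Adj ↑a.2 ↑b.2)

open Finset

section Chains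

variable {α β : Type*} [PartialOrder α] [Preorder β] {n : ℕ} {s : Fin n → α}

theorem StrictMono.card_filter_le_one (hs : StrictMono s) {A : Set α}
    [DecidablePred (· ∈ A)] (hA : IsAntichain (· ≤ ·) A) :
    (univ.filter fun k => s k ∈ A).card ≤ 1 := by
  refine card_le_one.mpr fun i hi j hj => ?_
  simp only [mem_filter, mem_univ, true_and] at hi hj
  rcases le_total i j with h | h
  · exact hs.injective (hA.eq hi hj (hs.monotone h))
  · exact (hs.injective (hA.eq hj hi (hs.monotone h))).symm

theorem StrictMono.card_filter_le (hs : StrictMono s) {A : Set α} [DecidablePred (· ∈ A)]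
    {f : α → β} (hf : StrictMonoOn f A) {B : Set β} (hAB : Set.MapsTo f A B) {w : ℕ}
    (hw : ∀ (m : ℕ) (t : Fin m → β), StrictMono t → (∀ k, t k ∈ B) → m ≤ w) :
    (univ.filter fun k => s k ∈ A).card ≤ w := by
  set T := univ.filter fun k => s k ∈ A
  have hT : ∀ i, s (T.orderEmbOfFin rfl i) ∈ A := fun i =>
    (mem_filter.mp (T.orderEmbOfFin_mem rfl i)).2
  refine hw _ (fun i => f (s (T.orderEmbOfFin rfl i))) (fun i j hij => ?_) fun i => hAB (hT i)
  exact hf (hT i) (hT j) (hs ((T.orderEmbOfFin rfl).strictMono hij))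

end Chains

theorem IsHalfspace.compl {V : Type} {G : SimpleGraph V} {H : Set V} (hH : IsHalfspace G H) :
    IsHalfspace G Hᶜ := by
  obtain ⟨hne, hcne, hcv, hccv⟩ := hH
  exact ⟨hcne, by rwa [compl_compl], hccv, by rwa [compl_compl]⟩

theorem SimpleGraph.Connected.mem_gInterval {V : Type} {G : SimpleGraph V} (hG : G.Connected)
    {x y z : V} (h : G.dist x z + G.dist z y ≤ G.dist x y) : z ∈ gInterval G x y :=
  le_antisymm h hG.dist_triangle

namespace glueGraph

variable {V J : Type} {G : SimpleGraph V} {L : J → Set V}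

theorem adj_inl_inl {a b : V} : (glueGraph G L).Adj (.inl a) (.inl b) ↔ G.Adj a b := by
  simp only [glueGraph, SimpleGraph.fromRel_adj, ne_eq, Sum.inl.injEq]
  exact ⟨fun ⟨_, h⟩ => h.elim id .symm, fun h => ⟨h.ne, .inl h⟩⟩

theorem adj_inl_inr {a : V} {b : Σ j, L j} :
    (glueGraph G L).Adj (.inl a) (.inr b) ↔ a = b.2 := by
  simp [glueGraph]

theorem adj_inr_inl {a : V} {b : Σ j, L j} :
    (glueGraph G L).Adj (.inr b) (.inl a) ↔ a = b.2 := by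
  simp [glueGraph]

theorem adj_inr_inr {b c : Σ j, L j} :
    (glueGraph G L).Adj (.inr b) (.inr c) ↔ b.1 = c.1 ∧ G.Adj b.2 c.2 := by
  simp only [glueGraph, SimpleGraph.fromRel_adj, ne_eq, Sum.inr.injEq]
  constructor
  · rintro ⟨_, h | h⟩
    · exact h
    · exact ⟨h.1.symm, h.2.symm⟩
  · rintro ⟨h₁, h₂⟩
    exact ⟨fun hbc => h₂.ne (by rw [hbc]), .inl ⟨h₁, h₂⟩⟩

def base : V ⊕ (Σ j, L j) → V
  | .inl a => a
  | .inr b => b.2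

open Classical in
/-- The path metric of the star with centre `V` and one leaf per sheet. -/
noncomputable def sheetDist : V ⊕ (Σ j, L j) → V ⊕ (Σ j, L j) → ℕ
  | .inl _, .inl _ => 0
  | .inl _, .inr _ => 1
  | .inr _, .inl _ => 1
  | .inr b, .inr c => if b.1 = c.1 then 0 else 2

theorem sheetDist_self (u : V ⊕ (Σ j, L j)) : sheetDist u u = 0 := by
  cases u <;> simp [sheetDist]

theorem adj_cases {u v : V ⊕ (Σ j, L j)} (h : (glueGraph G L).Adj u v) :
    (G.Adj (base u) (base v) ∧ ∀ t, sheetDist u t = sheetDist v t) ∨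
      (base u = base v ∧ ∀ t, sheetDist u t ≤ sheetDist v t + 1) := by
  match u, v with
  | .inl a, .inl b => exact .inl ⟨adj_inl_inl.mp h, fun t => by cases t <;> rfl⟩
  | .inl a, .inr b =>
    refine .inr ⟨adj_inl_inr.mp h, fun t => ?_⟩
    cases t <;> simp only [sheetDist] <;> grind
  | .inr b, .inl a =>
    refine .inr ⟨(adj_inr_inl.mp h).symm, fun t => ?_⟩
    cases t <;> simp only [sheetDist] <;> grind
  | .inr b, .inr c =>
    obtain ⟨hbc, hadj⟩ := adj_inr_inr.mp h
    exact .inl ⟨hadj, fun t => by cases t <;> simp only [sheetDist]; rw [hbc]⟩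

theorem exists_walk_base {u v : V ⊕ (Σ j, L j)} (p : (glueGraph G L).Walk u v) :
    ∃ q : G.Walk (base u) (base v), q.length + sheetDist u v ≤ p.length := by
  induction p with
  | nil => exact ⟨.nil, by simp [sheetDist_self]⟩
  | @cons u u' v h p ih =>
    obtain ⟨q, hq⟩ := ih
    rcases adj_cases h with ⟨hadj, hδ⟩ | ⟨hbase, hδ⟩
    · exact ⟨.cons hadj q, by simp only [SimpleGraph.Walk.length_cons, hδ v]; omega⟩
    · refine ⟨q.copy hbase.symm rfl, ?_⟩
      simp only [SimpleGraph.Walk.length_copy, SimpleGraph.Walk.length_cons]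
      linarith [hδ v]

def inlHom : G →g glueGraph G L :=
  ⟨Sum.inl, adj_inl_inl.mpr⟩

theorem connected (hG : G.Connected) : (glueGraph G L).Connected := by
  have hdown : ∀ u, (glueGraph G L).Reachable u (.inl (base u)) := by
    rintro (a | b)
    · rfl
    · exact (adj_inr_inl.mpr rfl).reachable
  have : Nonempty (V ⊕ (Σ j, L j)) := ⟨.inl hG.nonempty.some⟩
  exact .mk fun u v => (hdown u).trans <|
    ((hG (base u) (base v)).map inlHom).trans (hdown v).symm

theorem dist_base_add_sheetDist_le (hG : G.Connected) (u v : V ⊕ (Σ j, L j)) :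
    G.dist (base u) (base v) + sheetDist u v ≤ (glueGraph G L).dist u v := by
  obtain ⟨p, hp⟩ := ((connected hG).preconnected u v).exists_walk_length_eq_dist
  obtain ⟨q, hq⟩ := exists_walk_base p
  linarith [SimpleGraph.dist_le q]

theorem dist_inl_inl (hG : G.Connected) (a b : V) :
    (glueGraph G L).dist (.inl a) (.inl b) = G.dist a b := by
  obtain ⟨q, hq⟩ := (hG a b).exists_walk_length_eq_dist
  have hle := SimpleGraph.dist_le (q.map (inlHom (L := L)))
  have hge := dist_base_add_sheetDist_le (L := L) hG (.inl a) (.inl b)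
  rw [SimpleGraph.Walk.length_map, hq] at hle
  exact le_antisymm hle hge

theorem dist_inr_inl_base (b : Σ j, L j) : (glueGraph G L).dist (.inr b) (.inl b.2) = 1 :=
  SimpleGraph.dist_eq_one_iff_adj.mpr (adj_inr_inl.mpr rfl)

theorem inl_mem_gInterval_inl (hG : G.Connected) {a b x : V} (h : x ∈ gInterval G a b) :
    .inl x ∈ gInterval (glueGraph G L) (.inl a) (.inl b) := by
  show _ = _
  rwa [dist_inl_inl hG, dist_inl_inl hG, dist_inl_inl hG]

theorem inl_base_mem_gInterval_inr_inl (hG : G.Connected) (b : Σ j, L j) (a : V) :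
    .inl b.2 ∈ gInterval (glueGraph G L) (.inr b) (.inl a) := by
  refine (connected hG).mem_gInterval ?_
  have := dist_base_add_sheetDist_le (L := L) hG (.inr b) (.inl a)
  rw [dist_inr_inl_base, dist_inl_inl hG]
  simp only [base, sheetDist] at this
  omega

theorem inl_base_mem_gInterval_inr_inr (hG : G.Connected) {b c : Σ j, L j} (hbc : b.1 ≠ c.1) :
    .inl b.2 ∈ gInterval (glueGraph G L) (.inr b) (.inr c) := by
  refine (connected hG).mem_gInterval ?_
  have hlow := dist_base_add_sheetDist_le (L := L) hG (.inr b) (.inr c)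
  have hup : (glueGraph G L).dist (.inl b.2) (.inr c) ≤ G.dist b.2 c.2 + 1 :=
    calc _ ≤ (glueGraph G L).dist (.inl b.2) (.inl c.2) +
            (glueGraph G L).dist (.inl c.2) (.inr c) := (connected hG).dist_triangle
      _ = G.dist b.2 c.2 + 1 := by
        rw [dist_inl_inl hG, SimpleGraph.dist_comm (u := Sum.inl _), dist_inr_inl_base]
  simp only [base, sheetDist, if_neg hbc] at hlow
  rw [dist_inr_inl_base]
  omega

theorem inr_mem_gInterval_inl_inr (hG : G.Connected) {b c : Σ j, L j} (hbc : b.1 = c.1)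
    (hadj : G.Adj b.2 c.2) : .inr b ∈ gInterval (glueGraph G L) (.inl b.2) (.inr c) := by
  refine (connected hG).mem_gInterval ?_
  have hlow := dist_base_add_sheetDist_le (L := L) hG (.inl b.2) (.inr c)
  simp only [base, sheetDist, SimpleGraph.dist_eq_one_iff_adj.mpr hadj] at hlow
  rw [SimpleGraph.dist_comm, dist_inr_inl_base,
    SimpleGraph.dist_eq_one_iff_adj.mpr (adj_inr_inr.mpr ⟨hbc, hadj⟩)]
  omega

def sheet (j : J) : Set (V ⊕ (Σ j, L j)) :=
  Sum.inr '' {b | b.1 = j}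

theorem gConvex_preimage_inl (hG : G.Connected) {H : Set (V ⊕ (Σ j, L j))}
    (hH : GConvex (glueGraph G L) H) : GConvex G (Sum.inl ⁻¹' H) :=
  fun _ hx _ hy _ hz => hH _ hx _ hy (inl_mem_gInterval_inl hG hz)

theorem preimage_base_preimage_inl (hG : G.Connected) {H : Set (V ⊕ (Σ j, L j))}
    (hH : IsHalfspace (glueGraph G L) H) {a a' : V} (ha : .inl a ∈ H) (ha' : .inl a' ∉ H) :
    base ⁻¹' (Sum.inl ⁻¹' H) = H := by
  ext (a'' | b)
  · rfl
  · refine ⟨fun hb => ?_, fun hb => hH.2.2.1 _ hb _ ha (inl_base_mem_gInterval_inr_inl hG b a)⟩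
    by_contra hbH
    exact hH.2.2.2 _ hbH _ ha' (inl_base_mem_gInterval_inr_inl hG b a') hb

variable (G L) in
def crossingHalfspaces : Set (Set (V ⊕ (Σ j, L j))) :=
  {H | IsHalfspace (glueGraph G L) H ∧ (Sum.inl ⁻¹' H).Nonempty ∧ (Sum.inl ⁻¹' H)ᶜ.Nonempty}

theorem strictMonoOn_preimage_inl (hG : G.Connected) :
    StrictMonoOn (Sum.inl ⁻¹' ·) (crossingHalfspaces G L) := by
  rintro H₁ ⟨h₁, ⟨a₁, ha₁⟩, ⟨a₁', ha₁'⟩⟩ H₂ ⟨h₂, ⟨a₂, ha₂⟩, ⟨a₂', ha₂'⟩⟩ hlt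
  refine (Set.preimage_mono hlt.le).lt_of_ne fun heq => hlt.ne ?_
  rw [← preimage_base_preimage_inl hG h₁ ha₁ ha₁', ← preimage_base_preimage_inl hG h₂ ha₂ ha₂',
    heq]

theorem mapsTo_preimage_inl (hG : G.Connected) :
    Set.MapsTo (Sum.inl ⁻¹' ·) (crossingHalfspaces G L) {H | IsHalfspace G H} :=
  fun _ ⟨hH, hne, hcne⟩ =>
    ⟨hne, hcne, gConvex_preimage_inl hG hH.2.2.1, gConvex_preimage_inl hG hH.2.2.2⟩

theorem exists_eq_sheet (hG : G.Connected) (hL : ∀ j, (G.induce (L j)).Connected)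
    {H : Set (V ⊕ (Σ j, L j))} (hH : IsHalfspace (glueGraph G L) H)
    (h0 : Sum.inl ⁻¹' H = ∅) : ∃ j, H = sheet j := by
  obtain ⟨⟨u, hu⟩, -, hconv, hconvc⟩ := hH
  have hinl : ∀ a, .inl a ∉ H := fun a ha => (h0 ▸ ha : a ∈ (∅ : Set V))
  rcases u with a | ⟨j, x⟩
  · exact absurd hu (hinl a)
  refine ⟨j, Set.Subset.antisymm ?_ ?_⟩
  · rintro (a | c) hc
    · exact absurd hc (hinl a)
    refine ⟨c, ?_, rfl⟩
    by_contra hcj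
    exact hinl _ (hconv _ hc _ hu (inl_base_mem_gInterval_inr_inr hG hcj))
  · rintro _ ⟨⟨j', y⟩, hj : j' = j, rfl⟩
    subst j'
    by_contra hy
    obtain ⟨d, -, hd, hd'⟩ := ((hL j).preconnected x y).some.exists_boundary_dart
      {z | (.inr ⟨j, z⟩ : V ⊕ (Σ j, L j)) ∈ H} hu hy
    exact hconvc _ (hinl _) _ hd'
      (inr_mem_gInterval_inl_inr (b := ⟨j, d.fst⟩) (c := ⟨j, d.snd⟩) hG rfl d.adj) hd

theorem isAntichain_isHalfspace_preimage_inl_eq_empty (hG : G.Connected)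
    (hL : ∀ j, (G.induce (L j)).Connected) :
    IsAntichain (· ≤ ·) {H | IsHalfspace (glueGraph G L) H ∧ Sum.inl ⁻¹' H = ∅} := by
  rintro H₁ ⟨h₁, e₁⟩ H₂ ⟨h₂, e₂⟩ hne hle
  obtain ⟨j₁, rfl⟩ := exists_eq_sheet hG hL h₁ e₁
  obtain ⟨j₂, rfl⟩ := exists_eq_sheet hG hL h₂ e₂
  obtain ⟨_, b, rfl, rfl⟩ := h₁.1
  obtain ⟨c, rfl, hcb⟩ := hle ⟨b, rfl, rfl⟩
  exact hne (by rw [Sum.inr_injective hcb])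

theorem isAntichain_isHalfspace_preimage_inl_eq_univ (hG : G.Connected)
    (hL : ∀ j, (G.induce (L j)).Connected) :
    IsAntichain (· ≤ ·) {H | IsHalfspace (glueGraph G L) H ∧ Sum.inl ⁻¹' H = Set.univ} :=
  (isAntichain_isHalfspace_preimage_inl_eq_empty hG hL).preimage_compl.subset
    fun _ ⟨hH, h⟩ => ⟨hH.compl, by rw [Set.preimage_compl, h, Set.compl_univ]⟩

end glueGraph

open glueGraph in
/-- If the median graph `G` (underlying a cube complex `𝒞`) has width at most `w`,
then the complex `𝒞' = 𝒞 ∪ ⋃ᵢ (ℒᵢ × [0,1])` obtained by gluing products of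
connected subcomplexes with an interval has width at most `w + 2`. -/
theorem width_glue_le {V : Type} (G : SimpleGraph V) (hG : IsMedianGraph G)
    {J : Type} (L : J → Set V)
    (hL : ∀ j, (L j).Nonempty ∧ (G.induce (L j)).Connected)
    (w : ℕ)
    (hw : ∀ (n : ℕ) (s : Fin n → Set V), StrictMono s →
      (∀ k, IsHalfspace G (s k)) → n ≤ w) :
    ∀ (n : ℕ) (s : Fin n → Set (V ⊕ Σ j : J, ↥(L j))), StrictMono s →
      (∀ k, IsHalfspace (glueGraph G L) (s k)) → n ≤ w + 2 := by
  classical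
  intro n s hs hhalf
  have hLc : ∀ j, (G.induce (L j)).Connected := fun j => (hL j).2
  set T := crossingHalfspaces G L
  set A := {H | IsHalfspace (glueGraph G L) H ∧ Sum.inl ⁻¹' H = ∅}
  set B := {H | IsHalfspace (glueGraph G L) H ∧ Sum.inl ⁻¹' H = Set.univ}
  have hcover : (univ : Finset (Fin n)) ⊆ (univ.filter fun k => s k ∈ T) ∪
      (univ.filter fun k => s k ∈ A) ∪ (univ.filter fun k => s k ∈ B) := by
    intro k _
    simp only [mem_union, mem_filter, mem_univ, true_and]
    rcases (Sum.inl ⁻¹' s k).eq_empty_or_nonempty with h0 | hne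
    · exact .inl (.inr ⟨hhalf k, h0⟩)
    rcases (Sum.inl ⁻¹' s k)ᶜ.eq_empty_or_nonempty with h1 | hcne
    · exact .inr ⟨hhalf k, Set.compl_empty_iff.mp h1⟩
    · exact .inl (.inl ⟨hhalf k, hne, hcne⟩)
  calc n = (univ : Finset (Fin n)).card := (card_fin n).symm
    _ ≤ _ := card_le_card hcover
    _ ≤ _ := (card_union_le _ _).trans (add_le_add_left (card_union_le _ _) _)
    _ ≤ w + 1 + 1 := by
      gcongr
      · exact hs.card_filter_le (strictMonoOn_preimage_inl hG.1) (mapsTo_preimage_inl hG.1) hw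
      · exact hs.card_filter_le_one (isAntichain_isHalfspace_preimage_inl_eq_empty hG.1 hLc)
      · exact hs.card_filter_le_one (isAntichain_isHalfspace_preimage_inl_eq_univ hG.1 hLc)
end

section
/- Every CAT(0) cube complex with finite width and finitely colorable hyperplanes is regularly collapsible. -/
/-- Two halfspaces cross. -/
def Crossing {V : Type} (H K : Set V) : Prop :=
  (H ∩ K).Nonempty ∧ (H ∩ Kᶜ).Nonempty ∧ (Hᶜ ∩ K).Nonempty ∧ (Hᶜ ∩ Kᶜ).Nonempty

/-- Regular collapsibility in `m` steps: starting from a single point, each step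
glues a family of products of cuboids (nonempty convex connected subcomplexes)
with an interval. -/
inductive RegCollapsible : ∀ {V : Type}, SimpleGraph V → ℕ → Prop
  | point {V : Type} (G : SimpleGraph V) (v : V) (hv : ∀ w, w = v) : RegCollapsible G 0
  | glue {V : Type} {G : SimpleGraph V} {m : ℕ} (hG : RegCollapsible G m)
      {J : Type} (L : J → Set V)
      (hL : ∀ j, (L j).Nonempty ∧ (G.induce (L j)).Connected ∧ GConvex G (L j))
      {V' : Type} (G' : SimpleGraph V') (e : G' ≃g glueGraph G L) :
      RegCollapsible G' (m + 1)

/-!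
Fix a base vertex `x₀`. For a convex set `C ∋ x₀`, every halfspace avoiding `x₀` but meeting `C`
cuts out a trace on `C`. Minimal traces of one color are pairwise disjoint and non-adjacent
(their halfspaces do not cross), each vertex of such a trace has exactly one neighbour outside it,
and this matching is an isometry onto a convex set. Hence removing all minimal traces of one
color leaves a convex set from which `C` is rebuilt by a single regular gluing step. Traces only
shrink under this peeling, so after peeling every color once the bottom of any chain of traces is
gone: the longest chain gets shorter. Same-colored cuts with nested traces are nested halfspaces,
so chains of traces have length at most `n * w`, and after `n * w` rounds only `x₀` is left.
-/

namespace MedianGraph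

open SimpleGraph

variable {V : Type} {G : SimpleGraph V}

theorem mem_gInterval {x y w : V} :
    w ∈ gInterval G x y ↔ G.dist x w + G.dist w y = G.dist x y :=
  Iff.rfl

theorem exists_adj_mem_gInterval (hc : G.Connected) {x y : V} (hne : x ≠ y) :
    ∃ z, G.Adj x z ∧ z ∈ gInterval G x y := by
  obtain ⟨p, hp⟩ := hc.exists_walk_length_eq_dist x y
  cases p with
  | nil => exact absurd rfl hne
  | cons hxz q =>
    refine ⟨_, hxz, ?_⟩
    have hq := dist_le q
    have htri := hc.dist_triangle (u := x) (v := q.getVert 0) (w := y)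
    rw [Walk.length_cons] at hp
    simp only [Walk.getVert_zero, dist_eq_one_iff_adj.2 hxz] at htri ⊢
    rw [mem_gInterval, dist_eq_one_iff_adj.2 hxz]
    omega

theorem gInterval_subset_left (hc : G.Connected) {u v w : V} (hw : w ∈ gInterval G u v) :
    gInterval G u w ⊆ gInterval G u v := by
  intro x hx
  rw [mem_gInterval] at *
  have := hc.dist_triangle (u := u) (v := x) (w := v)
  have := hc.dist_triangle (u := x) (v := w) (w := v)
  omega

theorem dist_eq_two_of_adj_of_adj (hc : G.Connected) {u z w x : V} (huz : G.Adj u z)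
    (hzw : G.Adj z w) (h : G.dist w x + 2 = G.dist u x) : G.dist u w = 2 := by
  have h₁ := hc.dist_triangle (u := u) (v := z) (w := w)
  have h₂ := hc.dist_triangle (u := u) (v := w) (w := x)
  rw [dist_eq_one_iff_adj.2 huz, dist_eq_one_iff_adj.2 hzw] at h₁
  omega

theorem mem_gInterval_of_adj_of_adj {u z w : V} (huz : G.Adj u z) (hzw : G.Adj z w)
    (h : G.dist u w = 2) : z ∈ gInterval G u w := by
  rw [mem_gInterval, dist_eq_one_iff_adj.2 huz, dist_eq_one_iff_adj.2 hzw, h]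

/-- For an edge `ab` this is the halfspace `W(a, b)`. -/
def closerSet (G : SimpleGraph V) (a b : V) : Set V :=
  {w | G.dist w a < G.dist w b}

section Median

variable (hG : IsMedianGraph G)
include hG

theorem dist_succ_or_of_adj {a b : V} (hab : G.Adj a b) (w : V) :
    G.dist w b = G.dist w a + 1 ∨ G.dist w a = G.dist w b + 1 := by
  obtain ⟨m, ⟨hwa, hab', hwb⟩, -⟩ := hG.2 w a b
  rw [mem_gInterval, dist_eq_one_iff_adj.2 hab] at hab'
  rw [mem_gInterval] at hwa hwb
  rcases Nat.add_eq_one_iff.1 hab' with ⟨h0, -⟩ | ⟨-, h0⟩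
  · obtain rfl := hG.1.dist_eq_zero_iff.1 h0
    rw [dist_eq_one_iff_adj.2 hab] at hwb
    omega
  · obtain rfl := hG.1.dist_eq_zero_iff.1 h0
    rw [dist_eq_one_iff_adj.2 hab.symm] at hwa
    omega

theorem dist_succ_or_of_adj' {a b : V} (hab : G.Adj a b) (w : V) :
    G.dist b w = G.dist a w + 1 ∨ G.dist a w = G.dist b w + 1 := by
  rw [G.dist_comm (u := a), G.dist_comm (u := b)]
  exact dist_succ_or_of_adj hG hab w

theorem mem_closerSet_of_adj_of_adj {a b u z v : V} (hab : G.Adj a b)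
    (hu : u ∈ closerSet G a b) (hv : v ∈ closerSet G a b)
    (huz : G.Adj u z) (hzv : G.Adj z v) (huv : G.dist u v = 2) :
    z ∈ closerSet G a b := by
  have hc := hG.1
  by_contra hz
  -- with `P` the median of `u, v, a` and `R` that of `z, P, b`, both `z` and `P` would be
  -- medians of `u, v, R`
  simp only [closerSet, Set.mem_ofPred_eq, not_lt] at hu hv hz
  have := dist_succ_or_of_adj hG hab u
  have := dist_succ_or_of_adj hG hab v
  have := dist_succ_or_of_adj hG hab z
  have := dist_succ_or_of_adj' hG huz a
  have := dist_succ_or_of_adj' hG huz b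
  have := dist_succ_or_of_adj' hG hzv a
  have := dist_succ_or_of_adj' hG hzv b
  obtain ⟨P, ⟨huvP, hvaP, huaP⟩, -⟩ := hG.2 u v a
  rw [mem_gInterval] at huvP hvaP huaP
  have hPv := G.dist_comm (u := P) (v := v)
  have huP : G.Adj u P := dist_eq_one_iff_adj.1 (by omega)
  have hvP : G.Adj v P := dist_eq_one_iff_adj.1 (by omega)
  have := dist_succ_or_of_adj hG hab P
  have := dist_succ_or_of_adj' hG huP b
  have hzP : G.dist z P = 2 := dist_eq_two_of_adj_of_adj hc huz.symm huP (x := a) (by omega)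
  obtain ⟨R, ⟨hzPR, hPbR, hzbR⟩, -⟩ := hG.2 z P b
  rw [mem_gInterval] at hzPR hPbR hzbR
  have hRP := G.dist_comm (u := R) (v := P)
  have hzR : G.Adj z R := dist_eq_one_iff_adj.1 (by omega)
  have hPR : G.Adj P R := dist_eq_one_iff_adj.1 (by omega)
  have := dist_succ_or_of_adj hG hab R
  have := dist_succ_or_of_adj' hG hzR a
  have huR : G.dist u R = 2 := dist_eq_two_of_adj_of_adj hc huz hzR (x := b) (by omega)
  have hvR : G.dist v R = 2 := dist_eq_two_of_adj_of_adj hc hzv.symm hzR (x := b) (by omega)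
  have hzP : z = P := (hG.2 u v R).unique
    ⟨mem_gInterval_of_adj_of_adj huz hzv huv, mem_gInterval_of_adj_of_adj hzv.symm hzR hvR,
      mem_gInterval_of_adj_of_adj huz hzR huR⟩
    ⟨mem_gInterval_of_adj_of_adj huP hvP.symm huv, mem_gInterval_of_adj_of_adj hvP hPR hvR,
      mem_gInterval_of_adj_of_adj huP hPR huR⟩
  subst hzP
  omega

theorem exists_adj_mem_gInterval_inter {z v x : V} (h : z ∉ gInterval G v x) :
    ∃ y, G.Adj z y ∧ y ∈ gInterval G z v ∧ y ∈ gInterval G z x := by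
  obtain ⟨m, ⟨hzv, hvx, hzx⟩, -⟩ := hG.2 z v x
  have hne : z ≠ m := by
    rintro rfl
    exact h hvx
  obtain ⟨y, hzy, hy⟩ := exists_adj_mem_gInterval hG.1 hne
  exact ⟨y, hzy, gInterval_subset_left hG.1 hzv hy, gInterval_subset_left hG.1 hzx hy⟩

theorem exists_adj_mem_gInterval_dist_le {a b z v : V} (hab : G.Adj a b)
    (hz : z ∉ closerSet G a b) (hv : v ∈ closerSet G a b) :
    ∃ y, G.Adj z y ∧ y ∈ gInterval G z v ∧ G.dist y a ≤ G.dist z b := by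
  have hzW := dist_succ_or_of_adj hG hab z
  simp only [closerSet, Set.mem_ofPred_eq, not_lt] at hz hv
  by_cases hza : z ∈ gInterval G v a
  · have hzb : z ∉ gInterval G v b := by
      rw [mem_gInterval] at hza ⊢
      omega
    obtain ⟨y, hzy, hyv, hyb⟩ := exists_adj_mem_gInterval_inter hG hzb
    have := dist_succ_or_of_adj hG hab y
    rw [mem_gInterval, dist_eq_one_iff_adj.2 hzy] at hyb
    exact ⟨y, hzy, hyv, by omega⟩
  · obtain ⟨y, hzy, hyv, hya⟩ := exists_adj_mem_gInterval_inter hG hza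
    rw [mem_gInterval, dist_eq_one_iff_adj.2 hzy] at hya
    exact ⟨y, hzy, hyv, by omega⟩

theorem notMem_closerSet_of_mem_gInterval {a b u z v : V} (hab : G.Adj a b)
    (hu : u ∈ closerSet G a b) (hz : z ∉ closerSet G a b) (huz : G.Adj u z)
    (hzv : z ∈ gInterval G u v) : v ∉ closerSet G a b := by
  have hc := hG.1
  induction hK : G.dist z v using Nat.strong_induction_on generalizing u z with
  | _ K ih =>
  intro hv
  obtain ⟨y, hzy, hyv, hya⟩ := exists_adj_mem_gInterval_dist_le hG hab hz hv
  have hzW := dist_succ_or_of_adj hG hab z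
  simp only [closerSet, Set.mem_ofPred_eq, not_lt] at hu hz hv
  rw [mem_gInterval] at hzv hyv
  have := dist_eq_one_iff_adj.2 huz
  have := dist_eq_one_iff_adj.2 hzy
  have := hc.dist_triangle (u := u) (v := y) (w := v)
  have huy : G.dist u y = 2 := by
    have := hc.dist_triangle (u := u) (v := z) (w := y)
    omega
  by_cases hyW : G.dist y a < G.dist y b
  · exact absurd (mem_closerSet_of_adj_of_adj hG hab hu hyW huz hzy huy) (not_lt.2 hz)
  -- complete the square `u z y` to `u z y r` on the side of `a`, and restart from the edge `r y`
  obtain ⟨r, ⟨huyr, hyar, huar⟩, -⟩ := hG.2 u y a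
  rw [mem_gInterval] at huyr hyar huar
  have := dist_succ_or_of_adj hG hab u
  have := dist_succ_or_of_adj hG hab y
  have := dist_succ_or_of_adj' hG huz a
  have := dist_succ_or_of_adj' hG huz b
  have := dist_succ_or_of_adj' hG hzy a
  have := G.dist_comm (u := r) (v := y)
  have hur : G.Adj u r := dist_eq_one_iff_adj.1 (by omega)
  have hry : G.Adj r y := dist_eq_one_iff_adj.1 (by omega)
  have := dist_succ_or_of_adj hG hab r
  have := dist_succ_or_of_adj' hG hur b
  have := hc.dist_triangle (u := u) (v := r) (w := v)
  have := hc.dist_triangle (u := r) (v := y) (w := v)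
  have hrW : r ∈ closerSet G a b := by
    simp only [closerSet, Set.mem_ofPred_eq]
    omega
  have hyv' : y ∈ gInterval G r v := by
    rw [mem_gInterval]
    omega
  exact ih (G.dist y v) (by omega) hrW hyW hry hyv' rfl (by simpa [closerSet] using hv)

theorem gConvex_closerSet {a b : V} (hab : G.Adj a b) : GConvex G (closerSet G a b) := by
  intro u hu v hv x hx
  induction hM : G.dist u x using Nat.strong_induction_on generalizing u with
  | _ M ih =>
  rcases eq_or_ne u x with rfl | hux
  · exact hu
  obtain ⟨z, huz, hzx⟩ := exists_adj_mem_gInterval hG.1 hux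
  have hzv : z ∈ gInterval G u v := gInterval_subset_left hG.1 hx hzx
  by_cases hz : z ∈ closerSet G a b
  · have hxz : x ∈ gInterval G z v := by
      rw [mem_gInterval] at *
      have := hG.1.dist_triangle (u := z) (v := x) (w := v)
      omega
    rw [mem_gInterval, dist_eq_one_iff_adj.2 huz] at hzx
    exact ih _ (by omega) z hz hxz rfl
  · exact absurd hv (notMem_closerSet_of_mem_gInterval hG hab hu hz huz hzv)

theorem compl_closerSet {a b : V} (hab : G.Adj a b) :
    (closerSet G a b)ᶜ = closerSet G b a := by
  ext w
  have := dist_succ_or_of_adj hG hab w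
  simp only [closerSet, Set.mem_compl_iff, Set.mem_ofPred_eq]
  omega

theorem isHalfspace_closerSet {a b : V} (hab : G.Adj a b) : IsHalfspace G (closerSet G a b) := by
  have mem_self {x y : V} (hxy : G.Adj x y) : x ∈ closerSet G x y := by
    simp [closerSet, dist_eq_one_iff_adj.2 hxy]
  refine ⟨⟨a, mem_self hab⟩, ⟨b, ?_⟩, gConvex_closerSet hG hab, ?_⟩
  · rw [compl_closerSet hG hab]
    exact mem_self hab.symm
  · rw [compl_closerSet hG hab]
    exact gConvex_closerSet hG hab.symm

theorem eq_closerSet_of_adj {H : Set V} (hH : IsHalfspace G H) {u v : V} (hu : u ∈ H)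
    (hv : v ∉ H) (huv : G.Adj u v) : H = closerSet G u v := by
  have huv₁ := dist_eq_one_iff_adj.2 huv
  have hvu₁ := dist_eq_one_iff_adj.2 huv.symm
  ext w
  have := dist_succ_or_of_adj hG huv w
  simp only [closerSet, Set.mem_ofPred_eq]
  constructor
  · intro hw
    by_contra hwv
    exact hv (hH.2.2.1 w hw u hu (by rw [mem_gInterval]; omega))
  · intro hwu
    by_contra hw
    exact hH.2.2.2 w hw v hv (by rw [mem_gInterval]; omega) hu

theorem compl_eq_of_adj {H H' : Set V} (hH : IsHalfspace G H) (hH' : IsHalfspace G H')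
    {p q : V} (hpH : p ∈ H) (hpH' : p ∉ H') (hqH' : q ∈ H') (hqH : q ∉ H) (hpq : G.Adj p q) :
    H' = Hᶜ := by
  rw [eq_closerSet_of_adj hG hH hpH hqH hpq, eq_closerSet_of_adj hG hH' hqH' hpH' hpq.symm,
    compl_closerSet hG hpq]

end Median

theorem _root_.GConvex.inter {A B : Set V} (hA : GConvex G A) (hB : GConvex G B) :
    GConvex G (A ∩ B) :=
  fun x hx y hy _ hz => ⟨hA x hx.1 y hy.1 hz, hB x hx.2 y hy.2 hz⟩

theorem _root_.gConvex_univ : GConvex G Set.univ :=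
  fun _ _ _ _ _ _ => trivial

theorem exists_adj_mem_notMem (hc : G.Connected) {A H : Set V} (hA : GConvex G A) {z u : V}
    (hzA : z ∈ A) (hzH : z ∈ H) (huA : u ∈ A) (huH : u ∉ H) :
    ∃ p ∈ A, ∃ q ∈ A, p ∈ H ∧ q ∉ H ∧ G.Adj p q := by
  induction hM : G.dist z u using Nat.strong_induction_on generalizing z with
  | _ M ih =>
  have hzu : z ≠ u := by
    rintro rfl
    exact huH hzH
  obtain ⟨y, hzy, hyu⟩ := exists_adj_mem_gInterval hc hzu
  have hyA := hA z hzA u huA hyu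
  by_cases hyH : y ∈ H
  · rw [mem_gInterval, dist_eq_one_iff_adj.2 hzy] at hyu
    exact ih _ (by omega) hyA hyH rfl
  · exact ⟨z, hzA, y, hyA, hzH, hyH, hzy⟩

theorem mem_gInterval_of_mem_support (hc : G.Connected) {x y z : V} (p : G.Walk x y)
    (hp : p.length = G.dist x y) (hz : z ∈ p.support) : z ∈ gInterval G x y := by
  classical
  have h := congrArg Walk.length (p.take_spec hz)
  rw [Walk.length_append] at h
  have := dist_le (p.takeUntil z hz)
  have := dist_le (p.dropUntil z hz)
  have := hc.dist_triangle (u := x) (v := z) (w := y)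
  rw [mem_gInterval]
  omega

theorem dist_induce (hc : G.Connected) {A : Set V} (hA : GConvex G A) (x y : A) :
    (G.induce A).dist x y = G.dist x y := by
  obtain ⟨p, hp⟩ := hc.exists_walk_length_eq_dist x y
  let q := p.induce A fun z hz => hA x x.2 y y.2 (mem_gInterval_of_mem_support hc p hp hz)
  have hq : q.length = p.length := by
    rw [← Walk.length_map (Embedding.induce A).toHom, Walk.map_induce]
    rfl
  apply le_antisymm
  · exact (dist_le q).trans (hq.trans hp).le
  · obtain ⟨r, hr⟩ := Reachable.exists_walk_length_eq_dist (G := G.induce A) ⟨q⟩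
    rw [← hr, ← Walk.length_map (Embedding.induce A).toHom]
    exact dist_le _

theorem connected_induce (hc : G.Connected) {A : Set V} (hA : GConvex G A)
    (hne : A.Nonempty) : (G.induce A).Connected := by
  rw [connected_iff]
  refine ⟨fun x y => ?_, hne.to_subtype⟩
  obtain ⟨p, hp⟩ := hc.exists_walk_length_eq_dist x y
  exact ⟨p.induce A fun z hz => hA x x.2 y y.2 (mem_gInterval_of_mem_support hc p hp hz)⟩

theorem gConvex_induce (hc : G.Connected) {A B : Set V} (hA : GConvex G A)
    (hB : GConvex G (A ∩ B)) : GConvex (G.induce A) (Subtype.val ⁻¹' B) := by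
  intro x hx y hy z hz
  rw [mem_gInterval, dist_induce hc hA, dist_induce hc hA, dist_induce hc hA] at hz
  exact (hB x ⟨x.2, hx⟩ y ⟨y.2, hy⟩ hz).2

def IsGate (G : SimpleGraph V) (A : Set V) (z g : V) : Prop :=
  g ∈ A ∧ ∀ k ∈ A, g ∈ gInterval G z k

theorem IsGate.eq_of_adj (hc : G.Connected) {A : Set V} {z g n : V} (hg : IsGate G A z g)
    (hz : z ∉ A) (hn : n ∈ A) (hzn : G.Adj z n) : g = n := by
  have h := hg.2 n hn
  rw [mem_gInterval, dist_eq_one_iff_adj.2 hzn] at h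
  rcases Nat.add_eq_one_iff.1 h with ⟨h0, -⟩ | ⟨-, h0⟩
  · exact absurd (hc.dist_eq_zero_iff.1 h0 ▸ hg.1) hz
  · exact hc.dist_eq_zero_iff.1 h0

section Median

variable (hG : IsMedianGraph G)
include hG

theorem exists_isGate {A : Set V} (hA : GConvex G A) (hne : A.Nonempty) (z : V) :
    ∃ g, IsGate G A z g := by
  obtain ⟨g, hgA, hmin⟩ := exists_minimalFor_of_wellFoundedLT (· ∈ A) (G.dist z) hne
  refine ⟨g, hgA, fun k hk => ?_⟩
  obtain ⟨m, ⟨hzg, hgk, hzk⟩, -⟩ := hG.2 z g k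
  have hmg := hmin (hA g hgA k hk hgk)
  rw [mem_gInterval] at hzg
  obtain rfl : m = g := hG.1.dist_eq_zero_iff.1 (by omega)
  exact hzk

theorem eq_of_adj_of_notMem {A : Set V} (hA : GConvex G A) {z n₁ n₂ : V} (hz : z ∉ A)
    (h₁ : n₁ ∈ A) (h₂ : n₂ ∈ A) (hzn₁ : G.Adj z n₁) (hzn₂ : G.Adj z n₂) : n₁ = n₂ := by
  obtain ⟨g, hg⟩ := exists_isGate hG hA ⟨n₁, h₁⟩ z
  exact (hg.eq_of_adj hG.1 hz h₁ hzn₁).symm.trans (hg.eq_of_adj hG.1 hz h₂ hzn₂)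

theorem dist_eq_succ_of_adj_of_notMem {A : Set V} (hA : GConvex G A) {z v k : V} (hz : z ∉ A)
    (hv : v ∈ A) (hzv : G.Adj z v) (hk : k ∈ A) : G.dist z k = G.dist v k + 1 := by
  obtain ⟨g, hg⟩ := exists_isGate hG hA ⟨v, hv⟩ z
  obtain rfl := hg.eq_of_adj hG.1 hz hv hzv
  have := hg.2 k hk
  rw [mem_gInterval, dist_eq_one_iff_adj.2 hzv] at this
  omega

theorem dist_eq_of_adj_of_adj {A B : Set V} (hA : GConvex G A) (hB : GConvex G B)
    (hAB : Disjoint A B) {v v' y y' : V} (hv : v ∈ A) (hv' : v' ∈ A) (hy : y ∈ B) (hy' : y' ∈ B)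
    (hvy : G.Adj v y) (hv'y' : G.Adj v' y') : G.dist y y' = G.dist v v' := by
  have h₁ := dist_eq_succ_of_adj_of_notMem hG hA (Set.disjoint_right.1 hAB hy) hv hvy.symm hv'
  have h₂ := dist_eq_succ_of_adj_of_notMem hG hB (Set.disjoint_left.1 hAB hv') hy' hv'y' hy
  rw [G.dist_comm (u := v'), G.dist_comm (u := y')] at h₂
  omega

theorem gConvex_setOf_adj {A B : Set V} (hA : GConvex G A) (hB : GConvex G B)
    (hAB : Disjoint A B) : GConvex G {z | z ∈ B ∧ ∃ v ∈ A, G.Adj v z} := by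
  rintro x ⟨hxB, u, huA, hux⟩ y ⟨hyB, u', hu'A, hu'y⟩ z hz
  have hzB := hB x hxB y hyB hz
  refine ⟨hzB, ?_⟩
  have hux' := dist_eq_succ_of_adj_of_notMem hG hB (Set.disjoint_left.1 hAB huA) hxB hux hzB
  have hu'y' := dist_eq_succ_of_adj_of_notMem hG hB (Set.disjoint_left.1 hAB hu'A) hyB hu'y hzB
  have hxy := dist_eq_of_adj_of_adj hG hA hB hAB huA hu'A hxB hyB hux hu'y
  obtain ⟨p, ⟨huu', hu'z, huz⟩, -⟩ := hG.2 u u' z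
  refine ⟨p, hA u huA u' hu'A huu', dist_eq_one_iff_adj.1 ?_⟩
  rw [mem_gInterval] at huu' hu'z huz hz
  have := G.dist_comm (u := u') (v := p)
  have := G.dist_comm (u := z) (v := y)
  omega

end Median

def attachSet (G : SimpleGraph V) (C' T : Set V) : Set C' :=
  {y | ∃ v ∈ T, G.Adj v y}

/-- `S` is `C'` with each collar `T j` glued on along the matching that sends a vertex of `T j`
to its unique neighbour outside `T j`; the matching is required to be an isometry. -/
structure IsGluing (G : SimpleGraph V) (S C' : Set V) {J : Type} (T : J → Set V) : Prop where
  subset : C' ⊆ S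
  collar_subset : ∀ j, T j ⊆ S
  disjoint_collar : ∀ j, Disjoint C' (T j)
  pairwise_disjoint : Pairwise fun i j => Disjoint (T i) (T j)
  cover : ∀ v ∈ S, v ∉ C' → ∃ j, v ∈ T j
  not_adj : ∀ i j, i ≠ j → ∀ v ∈ T i, ∀ w ∈ T j, ¬ G.Adj v w
  existsUnique_adj : ∀ j, ∀ v ∈ T j, ∃! y, (y ∈ S ∧ y ∉ T j) ∧ G.Adj v y
  dist_eq : ∀ j, ∀ v ∈ T j, ∀ v' ∈ T j, ∀ y ∈ C', ∀ y' ∈ C',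
    G.Adj v y → G.Adj v' y' → G.dist y y' = G.dist v v'

namespace IsGluing

variable {S C' : Set V} {J : Type} {T : J → Set V} (h : IsGluing G S C' T)
include h

theorem mem_of_adj {j : J} {v w : V} (hv : v ∈ T j) (hw : w ∈ S) (hwT : w ∉ T j)
    (hvw : G.Adj v w) : w ∈ C' := by
  by_contra hwC'
  obtain ⟨i, hwi⟩ := h.cover w hw hwC'
  have hij : j ≠ i := by
    rintro rfl
    exact hwT hwi
  exact h.not_adj j i hij v hv w hwi hvw

theorem eq_of_adj_of_adj {j : J} {v v' y : V} (hv : v ∈ T j) (hv' : v' ∈ T j) (hy : y ∈ C')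
    (hvy : G.Adj v y) (hv'y : G.Adj v' y) : v = v' := by
  have hd := h.dist_eq j v hv v' hv' y hy y hy hvy hv'y
  rw [dist_self] at hd
  exact (hvy.reachable.trans hv'y.symm.reachable).dist_eq_zero_iff.1 hd.symm

theorem adj_iff {j : J} {v v' y y' : V} (hv : v ∈ T j) (hv' : v' ∈ T j) (hy : y ∈ C')
    (hy' : y' ∈ C') (hvy : G.Adj v y) (hv'y' : G.Adj v' y') : G.Adj v v' ↔ G.Adj y y' := by
  rw [← dist_eq_one_iff_adj, ← dist_eq_one_iff_adj, h.dist_eq j v hv v' hv' y hy y' hy' hvy hv'y']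

noncomputable def toFun : C' ⊕ (Σ j, attachSet G C' (T j)) → S
  | .inl y => ⟨y, h.subset y.2⟩
  | .inr ⟨j, y⟩ => ⟨y.2.choose, h.collar_subset j y.2.choose_spec.1⟩

theorem toFun_inl (y : C') : (h.toFun (.inl y) : V) = y :=
  rfl

theorem toFun_inr_mem {j : J} (y : attachSet G C' (T j)) :
    (h.toFun (.inr ⟨j, y⟩) : V) ∈ T j :=
  y.2.choose_spec.1

theorem adj_toFun_inr {j : J} (y : attachSet G C' (T j)) :
    G.Adj (h.toFun (.inr ⟨j, y⟩)) y.1.1 :=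
  y.2.choose_spec.2

theorem eq_of_adj_toFun_inr {j : J} (y : attachSet G C' (T j)) {y' : C'}
    (hy' : G.Adj (h.toFun (.inr ⟨j, y⟩)) y') : y' = y.1 :=
  Subtype.ext <| (h.existsUnique_adj j _ (h.toFun_inr_mem y)).unique
    ⟨⟨h.subset y'.2, Set.disjoint_left.1 (h.disjoint_collar j) y'.2⟩, hy'⟩
    ⟨⟨h.subset y.1.2, Set.disjoint_left.1 (h.disjoint_collar j) y.1.2⟩, h.adj_toFun_inr y⟩

theorem injective_toFun : Function.Injective h.toFun := by
  rintro (y | ⟨j, y⟩) (y' | ⟨j', y'⟩) hyy'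
  · have hyy : (y : V) = y' := congrArg (Subtype.val : S → V) hyy'
    rw [Subtype.ext hyy]
  · exact absurd (congrArg Subtype.val hyy' ▸ h.toFun_inr_mem y')
      (Set.disjoint_left.1 (h.disjoint_collar j') y.2)
  · exact absurd (congrArg Subtype.val hyy' ▸ h.toFun_inr_mem y)
      (Set.disjoint_left.1 (h.disjoint_collar j) y'.2)
  · have hp : (h.toFun (.inr ⟨j, y⟩) : V) = h.toFun (.inr ⟨j', y'⟩) := congrArg Subtype.val hyy'
    obtain rfl : j = j' := by
      by_contra hjj'
      exact Set.disjoint_left.1 (h.pairwise_disjoint hjj') (h.toFun_inr_mem y)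
        (hp ▸ h.toFun_inr_mem y')
    rw [Subtype.ext (h.eq_of_adj_toFun_inr y' (hp ▸ h.adj_toFun_inr y)).symm]

theorem surjective_toFun : Function.Surjective h.toFun := by
  rintro ⟨v, hv⟩
  by_cases hvC' : v ∈ C'
  · exact ⟨.inl ⟨v, hvC'⟩, rfl⟩
  obtain ⟨j, hvj⟩ := h.cover v hv hvC'
  obtain ⟨y, ⟨⟨hyS, hyT⟩, hvy⟩, -⟩ := h.existsUnique_adj j v hvj
  have hyC' := h.mem_of_adj hvj hyS hyT hvy
  let y' : attachSet G C' (T j) := ⟨⟨y, hyC'⟩, v, hvj, hvy⟩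
  exact ⟨.inr ⟨j, y'⟩, Subtype.ext
    (h.eq_of_adj_of_adj (h.toFun_inr_mem y') hvj hyC' (h.adj_toFun_inr y') hvy)⟩

theorem adj_toFun_iff (a b : C' ⊕ (Σ j, attachSet G C' (T j))) :
    G.Adj (h.toFun a) (h.toFun b) ↔
      (glueGraph (G.induce C') fun j => attachSet G C' (T j)).Adj a b := by
  rcases a with y | ⟨j, y⟩ <;> rcases b with y' | ⟨j', y'⟩ <;>
    simp only [glueGraph, fromRel_adj, ne_eq, reduceCtorEq, not_false_eq_true, true_and,
      or_false, false_or, induce_adj]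
  · rw [toFun_inl, toFun_inl]
    refine ⟨fun hyy' => ⟨fun he => hyy'.ne ?_, Or.inl hyy'⟩, fun ⟨_, hyy'⟩ => hyy'.elim id .symm⟩
    rw [Sum.inl_injective he]
  · rw [toFun_inl]
    refine ⟨fun hyp => h.eq_of_adj_toFun_inr y' hyp.symm, ?_⟩
    rintro rfl
    exact (h.adj_toFun_inr y').symm
  · rw [toFun_inl]
    refine ⟨fun hpy => h.eq_of_adj_toFun_inr y hpy, ?_⟩
    rintro rfl
    exact h.adj_toFun_inr y
  · have hiff {y' : attachSet G C' (T j)} := h.adj_iff (h.toFun_inr_mem y) (h.toFun_inr_mem y')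
      y.1.2 y'.1.2 (h.adj_toFun_inr y) (h.adj_toFun_inr y')
    constructor
    · intro hpp
      obtain rfl : j = j' := by
        by_contra hjj'
        exact h.not_adj j j' hjj' _ (h.toFun_inr_mem y) _ (h.toFun_inr_mem y') hpp
      have hyy' := hiff.1 hpp
      refine ⟨fun he => hyy'.ne ?_, Or.inl ⟨rfl, hyy'⟩⟩
      rw [eq_of_heq (Sigma.mk.inj_iff.1 (Sum.inr_injective he)).2]
    · rintro ⟨-, ⟨rfl, hyy'⟩ | ⟨rfl, hyy'⟩⟩
      · exact hiff.2 hyy'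
      · exact hiff.2 hyy'.symm

theorem nonempty_iso :
    Nonempty (G.induce S ≃g glueGraph (G.induce C') fun j => attachSet G C' (T j)) :=
  ⟨(⟨Equiv.ofBijective h.toFun ⟨h.injective_toFun, h.surjective_toFun⟩, h.adj_toFun_iff _ _⟩ :
    glueGraph (G.induce C') (fun j => attachSet G C' (T j)) ≃g G.induce S).symm⟩

theorem regCollapsible (hc : G.Connected) (hC' : GConvex G C') (hT : ∀ j, (T j).Nonempty)
    (hL : ∀ j, GConvex G (C' ∩ {z | ∃ v ∈ T j, G.Adj v z})) {m : ℕ}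
    (hm : RegCollapsible (G.induce C') m) : RegCollapsible (G.induce S) (m + 1) := by
  obtain ⟨e⟩ := h.nonempty_iso
  refine RegCollapsible.glue hm _ (fun j => ?_) _ e
  obtain ⟨v, hv⟩ := hT j
  obtain ⟨y, ⟨⟨hyS, hyT⟩, hvy⟩, -⟩ := h.existsUnique_adj j v hv
  have hyC' := h.mem_of_adj hv hyS hyT hvy
  have hLj : GConvex (G.induce C') (attachSet G C' (T j)) := gConvex_induce hc hC' (hL j)
  have hne : (attachSet G C' (T j)).Nonempty := ⟨⟨y, hyC'⟩, v, hv, hvy⟩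
  exact ⟨hne, connected_induce (connected_induce hc hC' ⟨y, hyC'⟩) hLj hne, hLj⟩

end IsGluing

structure IsCut (G : SimpleGraph V) (x₀ : V) (C H : Set V) : Prop where
  isHalfspace : IsHalfspace G H
  notMem : x₀ ∉ H
  nonempty : (H ∩ C).Nonempty

def traces (G : SimpleGraph V) (x₀ : V) (C : Set V) : Set (Set V) :=
  {T | ∃ H, IsCut G x₀ C H ∧ H ∩ C = T}

def IsProperColoring (G : SimpleGraph V) (Φ : Set V → ℕ) : Prop :=
  ∀ H K, IsHalfspace G H → IsHalfspace G K → Crossing H K → Φ H ≠ Φ K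

def minTracesOfColor (G : SimpleGraph V) (x₀ : V) (Φ : Set V → ℕ) (C : Set V) (c : ℕ) :
    Set (Set V) :=
  {T | Minimal (· ∈ traces G x₀ C) T ∧ ∃ H, IsCut G x₀ C H ∧ H ∩ C = T ∧ Φ H = c}

def peel (G : SimpleGraph V) (x₀ : V) (Φ : Set V → ℕ) (C : Set V) (c : ℕ) : Set V :=
  C \ ⋃₀ minTracesOfColor G x₀ Φ C c

variable {x₀ : V} {Φ : Set V → ℕ} {C : Set V}

theorem subset_or_subset_of_not_crossing {H K : Set V} (hHK : ¬ Crossing H K)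
    (h₁ : (H ∩ K).Nonempty) (h₄ : (Hᶜ ∩ Kᶜ).Nonempty) : H ⊆ K ∨ K ⊆ H := by
  by_contra! h
  obtain ⟨⟨x, hxH, hxK⟩, ⟨y, hyK, hyH⟩⟩ := And.intro (Set.not_subset.1 h.1) (Set.not_subset.1 h.2)
  exact hHK ⟨h₁, ⟨x, hxH, hxK⟩, ⟨y, hyH, hyK⟩, h₄⟩

theorem IsCut.subset_or_subset (hΦ : IsProperColoring G Φ) {H K : Set V} (hH : IsCut G x₀ C H)
    (hK : IsCut G x₀ C K) (hHK : Φ H = Φ K) (hne : (H ∩ K).Nonempty) : H ⊆ K ∨ K ⊆ H :=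
  subset_or_subset_of_not_crossing (fun hcr => hΦ H K hH.isHalfspace hK.isHalfspace hcr hHK) hne
    ⟨x₀, hH.notMem, hK.notMem⟩

theorem IsCut.mono {D H : Set V} (hH : IsCut G x₀ D H) (hDC : D ⊆ C) : IsCut G x₀ C H :=
  ⟨hH.isHalfspace, hH.notMem, hH.nonempty.mono (Set.inter_subset_inter_right H hDC)⟩

theorem subset_of_mem_traces {T : Set V} (hT : T ∈ traces G x₀ C) : T ⊆ C := by
  obtain ⟨H, -, rfl⟩ := hT
  exact Set.inter_subset_right

theorem nonempty_of_mem_traces {T : Set V} (hT : T ∈ traces G x₀ C) : T.Nonempty := by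
  obtain ⟨H, hH, rfl⟩ := hT
  exact hH.nonempty

theorem gConvex_of_mem_traces (hC : GConvex G C) {T : Set V} (hT : T ∈ traces G x₀ C) :
    GConvex G T := by
  obtain ⟨H, hH, rfl⟩ := hT
  exact hH.isHalfspace.2.2.1.inter hC

theorem gConvex_diff_of_mem_traces (hC : GConvex G C) {T : Set V} (hT : T ∈ traces G x₀ C) :
    GConvex G (C \ T) := by
  obtain ⟨H, hH, rfl⟩ := hT
  rw [Set.sdiff_inter_self_eq_sdiff, Set.sdiff_eq]
  exact hC.inter hH.isHalfspace.2.2.2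

theorem mem_diff_of_mem_traces (hx₀ : x₀ ∈ C) {T : Set V} (hT : T ∈ traces G x₀ C) :
    x₀ ∈ C \ T := by
  obtain ⟨H, hH, rfl⟩ := hT
  exact ⟨hx₀, fun h => hH.notMem h.1⟩

section Median

variable (hG : IsMedianGraph G)
include hG

theorem existsUnique_adj_of_minimal (hC : GConvex G C) (hx₀ : x₀ ∈ C) {T : Set V}
    (hT : Minimal (· ∈ traces G x₀ C) T) {v : V} (hv : v ∈ T) :
    ∃! z, (z ∈ C ∧ z ∉ T) ∧ G.Adj v z := by
  have hc := hG.1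
  have hA := gConvex_diff_of_mem_traces hC hT.prop
  have hvA : v ∉ C \ T := fun h => h.2 hv
  obtain ⟨g, hgA, hg⟩ := exists_isGate hG hA ⟨x₀, mem_diff_of_mem_traces hx₀ hT.prop⟩ v
  suffices hvg : G.Adj v g from
    ⟨g, ⟨hgA, hvg⟩, fun z hz => eq_of_adj_of_notMem hG hA hvA hz.1 hgA hz.2 hvg⟩
  by_contra hvg
  have hvg' : v ≠ g := fun h => hvA (h ▸ hgA)
  -- a first step `z` from `v` towards its gate `g` stays in `T`, and the halfspace `W(v, z)`
  -- has a trace strictly inside `T`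
  obtain ⟨z, hvz, hzg⟩ := exists_adj_mem_gInterval hc hvg'
  have hzC : z ∈ C := hC v (subset_of_mem_traces hT.prop hv) g hgA.1 hzg
  have hzA : z ∉ C \ T := fun hzA => by
    have hgz := hg z hzA
    rw [mem_gInterval, dist_eq_one_iff_adj.2 hvz] at hgz
    rw [mem_gInterval] at hzg
    have : G.dist v g ≠ 1 := fun h => hvg (dist_eq_one_iff_adj.1 h)
    have : G.dist v g ≠ 0 := fun h => hvg' (hc.dist_eq_zero_iff.1 h)
    omega
  have hzT : z ∈ T := by simpa [hzC] using hzA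
  have hAW : ∀ u ∈ C \ T, u ∉ closerSet G v z := by
    intro u hu
    have hzu := gInterval_subset_left hc (hg u hu) hzg
    rw [mem_gInterval, dist_eq_one_iff_adj.2 hvz] at hzu
    simp only [closerSet, Set.mem_ofPred_eq, G.dist_comm (u := u)]
    omega
  have hWT : closerSet G v z ∩ C ⊆ T := fun u ⟨huW, huC⟩ => by
    by_contra huT
    exact hAW u ⟨huC, huT⟩ huW
  have hcut : IsCut G x₀ C (closerSet G v z) :=
    ⟨isHalfspace_closerSet hG hvz, hAW x₀ (mem_diff_of_mem_traces hx₀ hT.prop),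
      v, by simp [closerSet, dist_eq_one_iff_adj.2 hvz], subset_of_mem_traces hT.prop hv⟩
  have hzW := (hT.eq_of_subset ⟨_, hcut, rfl⟩ hWT ▸ hzT).1
  simp [closerSet, dist_eq_one_iff_adj.2 hvz.symm] at hzW

theorem not_adj_of_disjoint {T T' : Set V} (hT : T ∈ traces G x₀ C) (hT' : T' ∈ traces G x₀ C)
    (hTT' : Disjoint T T') {u u' : V} (hu : u ∈ T) (hu' : u' ∈ T') : ¬ G.Adj u u' := by
  obtain ⟨H, hH, rfl⟩ := hT
  obtain ⟨H', hH', rfl⟩ := hT'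
  intro huu'
  have hu'H : u' ∉ H := fun h => Set.disjoint_left.1 hTT' ⟨h, hu'.2⟩ hu'
  have huH' : u ∉ H' := fun h => Set.disjoint_left.1 hTT' hu ⟨h, hu.2⟩
  have hH'H := compl_eq_of_adj hG hH.isHalfspace hH'.isHalfspace hu.1 huH' hu'.1 hu'H huu'
  exact hH'.notMem (hH'H ▸ hH.notMem)

end Median

theorem disjoint_of_mem_minTracesOfColor (hΦ : IsProperColoring G Φ) {c : ℕ} {T T' : Set V}
    (hT : T ∈ minTracesOfColor G x₀ Φ C c) (hT' : T' ∈ minTracesOfColor G x₀ Φ C c)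
    (hne : T ≠ T') : Disjoint T T' := by
  obtain ⟨hTmin, H, hH, rfl, hHc⟩ := hT
  obtain ⟨hT'min, H', hH', rfl, hH'c⟩ := hT'
  rw [Set.disjoint_left]
  rintro y ⟨hyH, -⟩ ⟨hyH', -⟩
  rcases hH.subset_or_subset hΦ hH' (hHc.trans hH'c.symm) ⟨y, hyH, hyH'⟩ with hsub | hsub
  · exact hne (hT'min.eq_of_subset ⟨H, hH, rfl⟩ (Set.inter_subset_inter_left C hsub))
  · exact hne (hTmin.eq_of_subset ⟨H', hH', rfl⟩ (Set.inter_subset_inter_left C hsub)).symm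

theorem peel_subset {c : ℕ} : peel G x₀ Φ C c ⊆ C :=
  Set.sdiff_subset

theorem mem_peel (hx₀ : x₀ ∈ C) (c : ℕ) : x₀ ∈ peel G x₀ Φ C c :=
  ⟨hx₀, fun ⟨_, hT, hx₀T⟩ => (mem_diff_of_mem_traces hx₀ hT.1.prop).2 hx₀T⟩

theorem mem_diff_of_mem_peel {c : ℕ} {T : Set V} (hT : T ∈ minTracesOfColor G x₀ Φ C c) {v : V}
    (hv : v ∈ peel G x₀ Φ C c) : v ∈ C \ T :=
  ⟨hv.1, fun hvT => hv.2 ⟨T, hT, hvT⟩⟩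

theorem inter_peel_eq_empty {c : ℕ} {T H : Set V} (hT : T ∈ minTracesOfColor G x₀ Φ C c)
    (hHT : H ∩ C = T) : H ∩ peel G x₀ Φ C c = ∅ :=
  Set.eq_empty_of_forall_notMem fun _ ⟨hvH, hv⟩ =>
    (mem_diff_of_mem_peel hT hv).2 (hHT ▸ ⟨hvH, hv.1⟩)

theorem gConvex_peel (hC : GConvex G C) (c : ℕ) : GConvex G (peel G x₀ Φ C c) := by
  intro x hx y hy z hz
  refine ⟨hC x hx.1 y hy.1 hz, fun ⟨T, hT, hzT⟩ => ?_⟩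
  obtain ⟨H, hH, rfl⟩ := hT.1.prop
  have hxH : x ∉ H := fun h => (mem_diff_of_mem_peel hT hx).2 ⟨h, hx.1⟩
  have hyH : y ∉ H := fun h => (mem_diff_of_mem_peel hT hy).2 ⟨h, hy.1⟩
  exact hH.isHalfspace.2.2.2 x hxH y hyH hz hzT.1

section Median

variable (hG : IsMedianGraph G)
include hG

theorem isGluing_peel (hC : GConvex G C) (hx₀ : x₀ ∈ C) (hΦ : IsProperColoring G Φ) (c : ℕ) :
    IsGluing G C (peel G x₀ Φ C c) (Subtype.val : minTracesOfColor G x₀ Φ C c → Set V) where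
  subset := peel_subset
  collar_subset T := subset_of_mem_traces T.2.1.prop
  disjoint_collar T := Set.disjoint_left.2 fun _ hv => (mem_diff_of_mem_peel T.2 hv).2
  pairwise_disjoint T T' hne :=
    disjoint_of_mem_minTracesOfColor hΦ T.2 T'.2 (Subtype.coe_injective.ne hne)
  cover v hv hvC' := by
    obtain ⟨T, hT, hvT⟩ : v ∈ ⋃₀ minTracesOfColor G x₀ Φ C c := by
      by_contra h
      exact hvC' ⟨hv, h⟩
    exact ⟨⟨T, hT⟩, hvT⟩
  not_adj T T' hne _ hv _ hw := not_adj_of_disjoint hG T.2.1.prop T'.2.1.prop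
    (disjoint_of_mem_minTracesOfColor hΦ T.2 T'.2 (Subtype.coe_injective.ne hne)) hv hw
  existsUnique_adj T _ hv := existsUnique_adj_of_minimal hG hC hx₀ T.2.1 hv
  dist_eq T _ hv _ hv' _ hy _ hy' hvy hv'y' :=
    dist_eq_of_adj_of_adj hG (gConvex_of_mem_traces hC T.2.1.prop)
      (gConvex_diff_of_mem_traces hC T.2.1.prop) Set.disjoint_sdiff_right hv hv'
      (mem_diff_of_mem_peel T.2 hy) (mem_diff_of_mem_peel T.2 hy') hvy hv'y'

theorem regCollapsible_of_peel (hC : GConvex G C) (hx₀ : x₀ ∈ C) (hΦ : IsProperColoring G Φ)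
    {c m : ℕ} (hm : RegCollapsible (G.induce (peel G x₀ Φ C c)) m) :
    RegCollapsible (G.induce C) (m + 1) := by
  refine (isGluing_peel hG hC hx₀ hΦ c).regCollapsible hG.1 (gConvex_peel hC c)
    (fun T => nonempty_of_mem_traces T.2.1.prop) (fun T => ?_) hm
  have hT := T.2.1.prop
  convert (gConvex_peel hC c).inter (gConvex_setOf_adj hG (gConvex_of_mem_traces hC hT)
    (gConvex_diff_of_mem_traces hC hT) Set.disjoint_sdiff_right) using 1
  ext z
  exact ⟨fun ⟨hz, hzT⟩ => ⟨hz, mem_diff_of_mem_peel T.2 hz, hzT⟩, fun ⟨hz, _, hzT⟩ => ⟨hz, hzT⟩⟩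

theorem inter_subset_of_inter_peel_subset (hC : GConvex G C) (hx₀ : x₀ ∈ C)
    (hΦ : IsProperColoring G Φ) {c : ℕ} {K H : Set V} (hK : IsCut G x₀ (peel G x₀ Φ C c) K)
    (hH : IsHalfspace G H) (hx₀H : x₀ ∉ H)
    (hKH : K ∩ peel G x₀ Φ C c ⊆ H ∩ peel G x₀ Φ C c) : K ∩ C ⊆ H ∩ C := by
  have hglue := isGluing_peel hG hC hx₀ hΦ c
  rintro u ⟨huK, huC⟩
  refine ⟨?_, huC⟩
  by_contra huH
  obtain ⟨z, hzK, hzC'⟩ := hK.nonempty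
  obtain ⟨p, ⟨hpK, hpC⟩, q, ⟨hqK, hqC⟩, hpH, hqH, hpq⟩ :=
    exists_adj_mem_notMem hG.1 (hK.isHalfspace.2.2.1.inter hC) ⟨hzK, peel_subset hzC'⟩
      (hKH ⟨hzK, hzC'⟩).1 ⟨huK, huC⟩ huH
  obtain ⟨T, hqT⟩ := hglue.cover q hqC fun hqC' => hqH (hKH ⟨hqK, hqC'⟩).1
  obtain ⟨H', hH', hH'T⟩ := T.2.1.prop
  have hqH' : q ∈ H' := (hH'T.symm ▸ hqT : q ∈ H' ∩ C).1
  by_cases hpT : p ∈ T.1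
  · -- the partner `z'` of `q` lies in the peel but not in `K`, so `K` is the halfspace `H'`
    -- of the edge `q z'`, whose trace on the peel is empty
    obtain ⟨z', ⟨⟨hz'C, hz'T⟩, hqz'⟩, -⟩ := hglue.existsUnique_adj T q hqT
    have hz'C' := hglue.mem_of_adj hqT hz'C hz'T hqz'
    have hz'H : z' ∉ H := fun hz'H => hz'T <| eq_of_adj_of_notMem hG (hH.2.2.1.inter hC)
      (fun h => hqH h.1) ⟨hpH, hpC⟩ ⟨hz'H, hz'C⟩ hpq.symm hqz' ▸ hpT
    have hz'K : z' ∉ K := fun hz'K => hz'H (hKH ⟨hz'K, hz'C'⟩).1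
    have hz'H' : z' ∉ H' := fun h => hz'T (hH'T ▸ ⟨h, hz'C⟩)
    have hKH' : K = H' := (eq_closerSet_of_adj hG hK.isHalfspace hqK hz'K hqz').trans
      (eq_closerSet_of_adj hG hH'.isHalfspace hqH' hz'H' hqz').symm
    have hempty := inter_peel_eq_empty T.2 hH'T
    rw [← hKH'] at hempty
    exact hempty.subset ⟨hzK, hzC'⟩
  · have hpH' : p ∉ H' := fun h => hpT (hH'T ▸ ⟨h, hpC⟩)
    have hH'H := compl_eq_of_adj hG hH hH'.isHalfspace hpH hpH' hqH' hqH hpq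
    exact hH'.notMem (hH'H ▸ hx₀H)

end Median

def iterPeel (G : SimpleGraph V) (x₀ : V) (Φ : Set V → ℕ) (C : Set V) : ℕ → Set V
  | 0 => C
  | k + 1 => peel G x₀ Φ (iterPeel G x₀ Φ C k) k

theorem iterPeel_antitone : Antitone (iterPeel G x₀ Φ C) :=
  antitone_nat_of_succ_le fun _ => peel_subset

theorem gConvex_iterPeel (hC : GConvex G C) : ∀ k, GConvex G (iterPeel G x₀ Φ C k)
  | 0 => hC
  | k + 1 => gConvex_peel (gConvex_iterPeel hC k) k

theorem mem_iterPeel (hx₀ : x₀ ∈ C) : ∀ k, x₀ ∈ iterPeel G x₀ Φ C k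
  | 0 => hx₀
  | k + 1 => mem_peel (mem_iterPeel hx₀ k) k

def HasTraceChain (G : SimpleGraph V) (x₀ : V) (C : Set V) (k : ℕ) : Prop :=
  ∃ s : Fin k → Set V, StrictMono s ∧ ∀ i, s i ∈ traces G x₀ C

theorem length_le_of_hasTraceChain (hΦ : IsProperColoring G Φ) {n w : ℕ}
    (hΦn : ∀ H, IsHalfspace G H → Φ H < n)
    (hw : ∀ (k : ℕ) (s : Fin k → Set V), StrictMono s → (∀ i, IsHalfspace G (s i)) → k ≤ w)
    {k : ℕ} (hk : HasTraceChain G x₀ C k) : k ≤ n * w := by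
  classical
  obtain ⟨s, hs, hsC⟩ := hk
  choose H hH hHs using hsC
  have hmono (c : ℕ) : StrictMonoOn H {i | Φ (H i) = c} := by
    intro i hi j hj hij
    obtain ⟨y, hyH, hyC⟩ := (hH i).nonempty
    have hyj : y ∈ H j ∩ C := hHs j ▸ (hs hij).le (hHs i ▸ ⟨hyH, hyC⟩)
    rcases (hH i).subset_or_subset hΦ (hH j) (hi.trans hj.symm) ⟨y, hyH, hyj.1⟩ with hsub | hsub
    · exact hsub.ssubset_of_ne fun he => (hs hij).ne (by rw [← hHs i, ← hHs j, he])
    · exact absurd (Set.inter_subset_inter_left C hsub) (hHs i ▸ hHs j ▸ (hs hij).not_subset)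
  have hfiber (c : ℕ) : (Finset.univ.filter fun i => Φ (H i) = c).card ≤ w := by
    set I := Finset.univ.filter fun i => Φ (H i) = c
    have hI (a : Fin I.card) : Φ (H (I.orderEmbOfFin rfl a)) = c :=
      (Finset.mem_filter.1 (I.orderEmbOfFin_mem rfl a)).2
    exact hw _ (H ∘ I.orderEmbOfFin rfl)
      (fun a b hab => hmono c (hI a) (hI b) ((I.orderEmbOfFin rfl).strictMono hab))
      fun a => (hH _).isHalfspace
  calc k = ∑ c ∈ Finset.range n, (Finset.univ.filter fun i => Φ (H i) = c).card := by
        rw [← Finset.card_eq_sum_card_fiberwise fun i _ => by simpa using hΦn _ (hH i).isHalfspace]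
        simp
    _ ≤ ∑ _c ∈ Finset.range n, w := Finset.sum_le_sum fun c _ => hfiber c
    _ = n * w := by simp

section Median

variable (hG : IsMedianGraph G)
include hG

theorem regCollapsible_of_iterPeel (hC : GConvex G C) (hx₀ : x₀ ∈ C)
    (hΦ : IsProperColoring G Φ) :
    ∀ k, (∃ m, RegCollapsible (G.induce (iterPeel G x₀ Φ C k)) m) →
      ∃ m, RegCollapsible (G.induce C) m
  | 0, h => h
  | k + 1, ⟨m, hm⟩ => regCollapsible_of_iterPeel hC hx₀ hΦ k
      ⟨m + 1, regCollapsible_of_peel hG (gConvex_iterPeel hC k) (mem_iterPeel hx₀ k) hΦ hm⟩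

theorem inter_subset_of_inter_iterPeel_subset (hC : GConvex G C) (hx₀ : x₀ ∈ C)
    (hΦ : IsProperColoring G Φ) {K H : Set V} {k : ℕ} (hK : IsCut G x₀ (iterPeel G x₀ Φ C k) K)
    (hH : IsHalfspace G H) (hx₀H : x₀ ∉ H)
    (hKH : K ∩ iterPeel G x₀ Φ C k ⊆ H ∩ iterPeel G x₀ Φ C k) : K ∩ C ⊆ H ∩ C := by
  induction k with
  | zero => exact hKH
  | succ k ih =>
    exact ih (hK.mono peel_subset) (inter_subset_of_inter_peel_subset hG (gConvex_iterPeel hC k)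
      (mem_iterPeel hx₀ k) hΦ hK hH hx₀H hKH)

theorem inter_iterPeel_eq_empty (hC : GConvex G C) (hx₀ : x₀ ∈ C) (hΦ : IsProperColoring G Φ)
    {K : Set V} (hK : IsCut G x₀ C K) (hmin : Minimal (· ∈ traces G x₀ C) (K ∩ C)) :
    K ∩ iterPeel G x₀ Φ C (Φ K + 1) = ∅ := by
  set D := iterPeel G x₀ Φ C (Φ K)
  have hDC : D ⊆ C := iterPeel_antitone (Nat.zero_le _)
  rcases (K ∩ D).eq_empty_or_nonempty with hKD | hKD
  · exact Set.subset_eq_empty (Set.inter_subset_inter_right K peel_subset) hKD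
  -- otherwise `K ∩ D` is still a minimal trace on `D`, of color `Φ K`, so it is peeled
  have hKD' : IsCut G x₀ D K := ⟨hK.isHalfspace, hK.notMem, hKD⟩
  refine inter_peel_eq_empty (c := Φ K) ⟨⟨⟨K, hKD', rfl⟩, ?_⟩, K, hKD', rfl, rfl⟩ rfl
  rintro _ ⟨N, hN, rfl⟩ hND v ⟨hvK, hvD⟩
  have hNC := inter_subset_of_inter_iterPeel_subset hG hC hx₀ hΦ hN hK.isHalfspace hK.notMem hND
  have hNK := hmin.eq_of_subset ⟨N, hN.mono hDC, rfl⟩ hNC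
  have hvN : v ∈ N ∩ C := hNK ▸ ⟨hvK, hDC hvD⟩
  exact ⟨hvN.1, hvD⟩

theorem not_hasTraceChain_iterPeel (hC : GConvex G C) (hx₀ : x₀ ∈ C)
    (hΦ : IsProperColoring G Φ) {n : ℕ} (hΦn : ∀ H, IsHalfspace G H → Φ H < n) {k : ℕ}
    (hk : ¬ HasTraceChain G x₀ C (k + 2)) :
    ¬ HasTraceChain G x₀ (iterPeel G x₀ Φ C n) (k + 1) := by
  rintro ⟨s, hs, hsD⟩
  set D := iterPeel G x₀ Φ C n
  have hDC : D ⊆ C := iterPeel_antitone (Nat.zero_le n)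
  choose H hH hHs using hsD
  have hlift : StrictMono fun i => H i ∩ C := by
    intro i j hij
    have hsub := inter_subset_of_inter_iterPeel_subset hG hC hx₀ hΦ (hH i) (hH j).isHalfspace
      (hH j).notMem (hHs i ▸ hHs j ▸ (hs hij).le)
    refine hsub.ssubset_of_ne fun he => (hs hij).ne ?_
    rw [← hHs i, ← hHs j, ← Set.inter_eq_right.2 hDC, ← Set.inter_assoc, he, Set.inter_assoc]
  -- the bottom of the lifted chain is a minimal trace on `C`, otherwise the chain would extend
  have hmin : Minimal (· ∈ traces G x₀ C) (H 0 ∩ C) := by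
    refine ⟨⟨H 0, (hH 0).mono hDC, rfl⟩, fun T hT hT0 => ?_⟩
    by_contra hne
    refine hk ⟨Matrix.vecCons T fun i => H i ∩ C, hlift.vecCons (lt_of_le_not_ge hT0 hne), ?_⟩
    refine Fin.cases hT fun i => ?_
    simpa using ⟨H i, (hH i).mono hDC, rfl⟩
  obtain ⟨y, hyH, hyD⟩ := (hH 0).nonempty
  have hdead := inter_iterPeel_eq_empty hG hC hx₀ hΦ ((hH 0).mono hDC) hmin
  exact hdead.subset ⟨hyH, iterPeel_antitone (hΦn _ (hH 0).isHalfspace) hyD⟩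

theorem exists_isCut {v : V} (hv : v ∈ C) (hne : x₀ ≠ v) :
    ∃ H, IsCut G x₀ C H := by
  obtain ⟨z, hx₀z, hzv⟩ := exists_adj_mem_gInterval hG.1 hne
  refine ⟨closerSet G z x₀, isHalfspace_closerSet hG hx₀z.symm, ?_, v, ?_, hv⟩
  · simp [closerSet]
  · rw [mem_gInterval, dist_eq_one_iff_adj.2 hx₀z] at hzv
    simp only [closerSet, Set.mem_ofPred_eq, G.dist_comm (u := v)]
    omega

theorem exists_regCollapsible (hΦ : IsProperColoring G Φ) {n : ℕ}
    (hΦn : ∀ H, IsHalfspace G H → Φ H < n) :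
    ∀ D C, GConvex G C → x₀ ∈ C → ¬ HasTraceChain G x₀ C (D + 1) →
      ∃ m, RegCollapsible (G.induce C) m
  | 0, C, _, hx₀, hD => by
    refine ⟨0, .point _ ⟨x₀, hx₀⟩ fun ⟨v, hv⟩ => Subtype.ext ?_⟩
    by_contra hne
    obtain ⟨H, hH⟩ := exists_isCut hG hv (Ne.symm hne)
    exact hD ⟨fun _ => H ∩ C, fun i j hij => absurd hij (by omega), fun _ => ⟨H, hH, rfl⟩⟩
  | D + 1, C, hC, hx₀, hD => regCollapsible_of_iterPeel hG hC hx₀ hΦ n <|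
      exists_regCollapsible hΦ hΦn D _ (gConvex_iterPeel hC n) (mem_iterPeel hx₀ n)
        (not_hasTraceChain_iterPeel hG hC hx₀ hΦ hΦn hD)

end Median

end MedianGraph

theorem RegCollapsible.of_iso {V W : Type} {G : SimpleGraph V} {G' : SimpleGraph W} {m : ℕ}
    (h : RegCollapsible G m) (e : G' ≃g G) : RegCollapsible G' m := by
  cases h with
  | point G v hv => exact .point G' (e.symm v) fun w => e.injective (by simp [hv (e w)])
  | glue hG L hL G e' => exact .glue hG L hL G' (e.trans e')

/-- Every CAT(0) cube complex (encoded by its median underlying graph) with finite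
width and finitely colorable hyperplanes is regularly collapsible. -/
theorem cat0_finiteWidth_colorable_regCollapsible {V : Type} (G : SimpleGraph V)
    (hG : IsMedianGraph G)
    (w : ℕ)
    (hw : ∀ (n : ℕ) (s : Fin n → Set V), StrictMono s →
      (∀ k, IsHalfspace G (s k)) → n ≤ w)
    (n : ℕ)
    (hcol : ∃ Φ : Set V → ℕ,
      (∀ H, IsHalfspace G H → Φ H < n ∧ Φ Hᶜ = Φ H) ∧
      ∀ H K, IsHalfspace G H → IsHalfspace G K → Crossing H K → Φ H ≠ Φ K) :
    ∃ m : ℕ, RegCollapsible G m := by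
  obtain ⟨Φ, hΦn, hΦ⟩ := hcol
  obtain ⟨x₀⟩ := hG.1.nonempty
  have hchain : ¬ MedianGraph.HasTraceChain G x₀ Set.univ (n * w + 1) := fun h =>
    (MedianGraph.length_le_of_hasTraceChain hΦ (fun H hH => (hΦn H hH).1) hw h).not_gt
      (Nat.lt_succ_self _)
  obtain ⟨m, hm⟩ := MedianGraph.exists_regCollapsible hG hΦ (fun H hH => (hΦn H hH).1) (n * w)
    Set.univ gConvex_univ (Set.mem_univ x₀) hchain
  exact ⟨m, hm.of_iso G.induceUnivIso.symm⟩
end
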